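/- arXiv:2603.08042 — 5 statements merged into one kernel-verified Lean document; each statement's English description precedes it below -/
import Mathlib

section
/- For every n ≥ 1, the expectation of ξ_{n+1} satisfies 𝔼(ξ_{n+1}) = ℙ(ξ_{n+1} = 1) = a_0 · (1 + b_1 + b_2 + ⋯ + b_n), where the sequence (b_n) is defined recursively by b_1 = a_1 and b_n = a_n + Σ_{i=1}^{n−1} b_{n−i} a_i for n ≥ 2. -/
/-!
Write `e n := 𝔼 ξ_n`. Taking expectations in the conditional-intensity identity (tower property)
shows that `e` solves the renewal equation `e n = a 0 + ∑_{i=1}^{n-1} a (n-i) e i`, whose solution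
is unique. The sequence `a 0 * (1 + b 1 + ⋯ + b (n-1))` solves it as well,
because `b` is the renewal sequence of `a`: `∑_{k ≤ m} b k = ∑_{i ≤ m} a i (1 + ∑_{k ≤ m-i} b k)`.
Finally `ξ_n` is `{0,1}`-valued, so `𝔼 ξ_n = ℙ(ξ_n = 1)`.
-/

open MeasureTheory Finset

lemma Finset.sum_Icc_one_reflect {M : Type*} [AddCommMonoid M] (f : ℕ → M) (m : ℕ) :
    ∑ i ∈ Icc 1 m, f (m + 1 - i) = ∑ i ∈ Icc 1 m, f i := by
  apply sum_nbij' (fun i => m + 1 - i) (fun i => m + 1 - i) <;>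
    intro i hi <;> simp only [mem_Icc] at * <;> omega

section Renewal

/-- For `n = 1` the sum is empty, so this includes `e 1 = a 0`. -/
def IsRenewalSolution (a e : ℕ → ℝ) : Prop :=
  ∀ n, 1 ≤ n → e n = a 0 + ∑ i ∈ Icc 1 (n - 1), a (n - i) * e i

variable {a : ℕ → ℝ}

theorem IsRenewalSolution.eq {e f : ℕ → ℝ} (he : IsRenewalSolution a e)
    (hf : IsRenewalSolution a f) : ∀ n, 1 ≤ n → e n = f n := by
  intro n
  induction n using Nat.strong_induction_on with
  | _ n ih =>
    intro hn
    rw [he n hn, hf n hn]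
    congr 1
    refine sum_congr rfl fun i hi => ?_
    obtain ⟨hi₁, hi₂⟩ := mem_Icc.1 hi
    rw [ih i (by omega) hi₁]

variable {b : ℕ → ℝ}
  (hb : ∀ n, 1 ≤ n → b n = a n + ∑ i ∈ Icc 1 (n - 1), b (n - i) * a i)
include hb

lemma sum_Icc_eq_sum_mul_one_add_sum_Icc :
    ∀ m, ∑ k ∈ Icc 1 m, b k = ∑ i ∈ Icc 1 m, a i * (1 + ∑ k ∈ Icc 1 (m - i), b k) := by
  intro m
  induction m with
  | zero => simp
  | succ m ih =>
    have hsplit : ∀ i ∈ Icc 1 m, a i * (1 + ∑ k ∈ Icc 1 (m + 1 - i), b k)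
        = a i * (1 + ∑ k ∈ Icc 1 (m - i), b k) + b (m + 1 - i) * a i := by
      intro i hi
      rw [mem_Icc] at hi
      rw [show m + 1 - i = m - i + 1 by omega, sum_Icc_succ_top (by omega)]
      ring
    rw [sum_Icc_succ_top (by omega), sum_Icc_succ_top (by omega), ih, sum_congr rfl hsplit,
      sum_add_distrib, hb (m + 1) (by omega)]
    simp only [Nat.add_sub_cancel, Nat.sub_self, Icc_eq_empty_of_lt zero_lt_one, sum_empty,
      add_zero, mul_one]
    ring

theorem isRenewalSolution_mul_one_add_sum :
    IsRenewalSolution a fun n => a 0 * (1 + ∑ k ∈ Icc 1 (n - 1), b k) := by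
  intro n hn
  obtain ⟨m, rfl⟩ : ∃ m, n = m + 1 := ⟨n - 1, by omega⟩
  have hreflect : ∑ i ∈ Icc 1 m, a (m + 1 - i) * (1 + ∑ k ∈ Icc 1 (i - 1), b k)
      = ∑ i ∈ Icc 1 m, a i * (1 + ∑ k ∈ Icc 1 (m - i), b k) := by
    rw [← sum_Icc_one_reflect (fun i => a i * (1 + ∑ k ∈ Icc 1 (m - i), b k))]
    refine sum_congr rfl fun i hi => ?_
    rw [mem_Icc] at hi
    rw [show m - (m + 1 - i) = i - 1 by omega]
  simp only [Nat.add_sub_cancel]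
  rw [sum_Icc_eq_sum_mul_one_add_sum_Icc hb, ← hreflect, mul_add, mul_one, mul_sum]
  congr 1
  exact sum_congr rfl fun i _ => by ring

end Renewal

section Bernoulli

variable {Ω : Type*} {X : Ω → ℝ}

lemma eq_indicator_one_of_forall_eq_zero_or_one (h01 : ∀ ω, X ω = 0 ∨ X ω = 1) :
    X = {ω | X ω = 1}.indicator fun _ => 1 := by
  funext ω
  rcases h01 ω with h | h <;> simp [h]

variable [MeasurableSpace Ω] {μ : Measure Ω}

lemma integrable_of_forall_eq_zero_or_one [IsFiniteMeasure μ] (hX : Measurable X)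
    (h01 : ∀ ω, X ω = 0 ∨ X ω = 1) : Integrable X μ := by
  rw [eq_indicator_one_of_forall_eq_zero_or_one h01]
  exact (integrable_const 1).indicator (hX (measurableSet_singleton 1))

lemma integral_eq_measureReal_of_forall_eq_zero_or_one (hX : Measurable X)
    (h01 : ∀ ω, X ω = 0 ∨ X ω = 1) : ∫ ω, X ω ∂μ = μ.real {ω | X ω = 1} := by
  have hs : MeasurableSet {ω | X ω = 1} := hX (measurableSet_singleton 1)
  conv_lhs => rw [eq_indicator_one_of_forall_eq_zero_or_one h01]
  rw [integral_indicator_const 1 hs, smul_eq_mul, mul_one]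

end Bernoulli

theorem isRenewalSolution_integral {Ω : Type*} [MeasurableSpace Ω] {μ : Measure Ω}
    [IsProbabilityMeasure μ] {a : ℕ → ℝ} {ξ : ℕ → Ω → ℝ}
    (ha₀ : 0 ≤ a 0) (hmeas : ∀ n, Measurable (ξ n))
    (hval : ∀ n, 1 ≤ n → ∀ ω, ξ n ω = 0 ∨ ξ n ω = 1)
    (hinit : μ {ω | ξ 1 ω = 1} = ENNReal.ofReal (a 0))
    (hcond : ∀ n, 2 ≤ n →
      μ[ξ n | ⨆ i ∈ Icc 1 (n - 1), MeasurableSpace.comap (ξ i) Real.measurableSpace]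
        =ᵐ[μ] fun ω => a 0 + ∑ i ∈ Icc 1 (n - 1), a (n - i) * ξ i ω) :
    IsRenewalSolution a fun n => ∫ ω, ξ n ω ∂μ := by
  intro n hn
  dsimp only
  obtain rfl | hn₂ := hn.eq_or_lt
  · rw [integral_eq_measureReal_of_forall_eq_zero_or_one (hmeas 1) (hval 1 le_rfl), measureReal_def,
      hinit, ENNReal.toReal_ofReal ha₀]
    simp
  have hle : ⨆ i ∈ Icc 1 (n - 1), MeasurableSpace.comap (ξ i) Real.measurableSpace ≤ ‹_› :=
    iSup₂_le fun i _ => (hmeas i).comap_le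
  have hint : ∀ i ∈ Icc 1 (n - 1), Integrable (fun ω => a (n - i) * ξ i ω) μ := fun i hi =>
    (integrable_of_forall_eq_zero_or_one (hmeas i) (hval i (mem_Icc.1 hi).1)).const_mul _
  calc ∫ ω, ξ n ω ∂μ = ∫ ω, (μ[ξ n | _]) ω ∂μ := (integral_condExp hle).symm
    _ = ∫ ω, a 0 + ∑ i ∈ Icc 1 (n - 1), a (n - i) * ξ i ω ∂μ := integral_congr_ae (hcond n hn₂)
    _ = a 0 + ∑ i ∈ Icc 1 (n - 1), a (n - i) * ∫ ω, ξ i ω ∂μ := by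
      rw [integral_add (integrable_const _) (integrable_finsetSum _ hint), integral_const,
        integral_finsetSum _ hint, probReal_univ, one_smul]
      simp only [integral_const_mul]

theorem dthp_expectation_formula_general
    {Ω : Type*} [MeasurableSpace Ω] (μ : Measure Ω) [IsProbabilityMeasure μ]
    (a : ℕ → ℝ) (ξ : ℕ → Ω → ℝ)
    (ha_pos : ∀ i, 0 < a i)
    (hmeas : ∀ n, Measurable (ξ n))
    (hval : ∀ n, 1 ≤ n → ∀ ω, ξ n ω = 0 ∨ ξ n ω = 1)
    (hinit : μ {ω | ξ 1 ω = 1} = ENNReal.ofReal (a 0))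
    (hcond : ∀ n, 2 ≤ n →
      μ[ξ n | ⨆ i ∈ Finset.Icc 1 (n - 1), MeasurableSpace.comap (ξ i) Real.measurableSpace]
        =ᵐ[μ] fun ω => a 0 + ∑ i ∈ Finset.Icc 1 (n - 1), a (n - i) * ξ i ω)
    (b : ℕ → ℝ)
    (hb1 : b 1 = a 1)
    (hbrec : ∀ n, 2 ≤ n → b n = a n + ∑ i ∈ Finset.Icc 1 (n - 1), b (n - i) * a i)
    :
    ∀ n, 1 ≤ n →
      (∫ ω, ξ (n + 1) ω ∂μ) = a 0 * (1 + ∑ i ∈ Finset.Icc 1 n, b i) ∧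
      μ {ω | ξ (n + 1) ω = 1} = ENNReal.ofReal (a 0 * (1 + ∑ i ∈ Finset.Icc 1 n, b i)) := by
  have hb : ∀ n, 1 ≤ n → b n = a n + ∑ i ∈ Icc 1 (n - 1), b (n - i) * a i := by
    intro n hn
    obtain rfl | hn₂ := hn.eq_or_lt
    · simpa using hb1
    · exact hbrec n hn₂
  intro n _
  have hE : ∫ ω, ξ (n + 1) ω ∂μ = a 0 * (1 + ∑ i ∈ Icc 1 n, b i) :=
    (isRenewalSolution_integral (ha_pos 0).le hmeas hval hinit hcond).eq
      (isRenewalSolution_mul_one_add_sum hb) (n + 1) (by omega)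
  refine ⟨hE, ?_⟩
  rw [← hE, integral_eq_measureReal_of_forall_eq_zero_or_one (hmeas _) (hval _ (by omega)),
    ofReal_measureReal]

theorem dthp_expectation_formula
    {Ω : Type*} [MeasurableSpace Ω] (μ : Measure Ω) [IsProbabilityMeasure μ]
    (a : ℕ → ℝ) (ξ : ℕ → Ω → ℝ)
    (ha_pos : ∀ i, 0 < a i)
    (ha_sum : Summable a)
    (ha_lt_one : ∑' i, a i < 1)
    (ha_moment : Summable (fun i : ℕ => (i : ℝ) * a i))
    (hmeas : ∀ n, Measurable (ξ n))
    (hval : ∀ n, 1 ≤ n → ∀ ω, ξ n ω = 0 ∨ ξ n ω = 1)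
    (hinit : μ {ω | ξ 1 ω = 1} = ENNReal.ofReal (a 0))
    (hcond : ∀ n, 2 ≤ n →
      μ[ξ n | ⨆ i ∈ Finset.Icc 1 (n - 1), MeasurableSpace.comap (ξ i) Real.measurableSpace]
        =ᵐ[μ] fun ω => a 0 + ∑ i ∈ Finset.Icc 1 (n - 1), a (n - i) * ξ i ω)
    (b : ℕ → ℝ)
    (hb1 : b 1 = a 1)
    (hbrec : ∀ n, 2 ≤ n → b n = a n + ∑ i ∈ Finset.Icc 1 (n - 1), b (n - i) * a i)
    :
    ∀ n, 1 ≤ n →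
      (∫ ω, ξ (n + 1) ω ∂μ) = a 0 * (1 + ∑ i ∈ Finset.Icc 1 n, b i) ∧
      μ {ω | ξ (n + 1) ω = 1} = ENNReal.ofReal (a 0 * (1 + ∑ i ∈ Finset.Icc 1 n, b i)) :=
  dthp_expectation_formula_general μ a ξ ha_pos hmeas hval hinit hcond b hb1 hbrec
end

section
/- As n → ∞, ℙ(ξ_n = 1) converges to a_0 / (1 − Σ_{i=1}^∞ a_i), and consequently ℙ(ξ_n = 0) converges to 1 − a_0 / (1 − Σ_{i=1}^∞ a_i). -/
/-!
Taking expectations in the conditional intensity shows that `p n = ℙ(ξ n = 1)` solves the renewal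
equation `p n = a 0 + ∑_{0 < i < n} a (n - i) * p i`. With `S = ∑_{i ≥ 1} a i < 1` and
`c = a 0 / (1 - S)`, the deviations `q n = |p n - c|` satisfy
`q n ≤ ∑_{i < n} a (n - i) * q i + o(1)`.
Once `q ≤ B` from some index on, the convolution is at most `S * B` plus a tail of `a`, so
`limsup q ≤ S * limsup q`, which forces `q n → 0`.
-/

open MeasureTheory Filter Topology Set

section Renewal

variable {a : ℕ → ℝ}

lemma sum_Icc_one_sub_eq_sum_range (f : ℕ → ℝ) (n : ℕ) :
    ∑ i ∈ Finset.Icc 1 (n - 1), f (n - i) = ∑ k ∈ Finset.range (n - 1), f (k + 1) := by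
  refine Finset.sum_nbij' (fun i => n - 1 - i) (fun k => n - 1 - k) ?_ ?_ ?_ ?_ fun i hi => ?_
  all_goals grind

lemma tendsto_sum_Icc_one_sub (ha : Summable a) :
    Tendsto (fun n => ∑ i ∈ Finset.Icc 1 (n - 1), a (n - i)) atTop (𝓝 (∑' i, a (i + 1))) := by
  simp only [sum_Icc_one_sub_eq_sum_range]
  exact ((summable_nat_add_iff 1).mpr ha).hasSum.tendsto_sum_nat.comp (tendsto_sub_atTop_nat 1)

lemma sum_range_sub_le_tsum (ha : ∀ i, 0 ≤ a i) (ha_sum : Summable a) (n : ℕ) :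
    ∑ i ∈ Finset.range n, a (n - i) ≤ ∑' i, a (i + 1) := by
  calc ∑ i ∈ Finset.range n, a (n - i) = ∑ k ∈ Finset.range n, a (k + 1) := by
        rw [← Finset.sum_range_reflect]
        exact Finset.sum_congr rfl fun i hi => by
          rw [Finset.mem_range] at hi; congr 1; omega
    _ ≤ ∑' i, a (i + 1) :=
        ((summable_nat_add_iff 1).mpr ha_sum).sum_le_tsum _ fun i _ => ha _

lemma sum_range_sub_mul_le {q : ℕ → ℝ} {M B : ℝ} {N n : ℕ} (ha : ∀ i, 0 ≤ a i)
    (ha_sum : Summable a) (hq : ∀ n, 0 ≤ q n) (hqM : ∀ n, q n ≤ M) (hqB : ∀ i ≥ N, q i ≤ B)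
    (hNn : N ≤ n) :
    ∑ i ∈ Finset.range n, a (n - i) * q i
      ≤ (∑' i, a (i + 1)) * B + M * ∑' k, a (k + (n - N + 1)) := by
  have hB : 0 ≤ B := (hq N).trans (hqB N le_rfl)
  have hhead : ∑ i ∈ Finset.range N, a (n - i) ≤ ∑' k, a (k + (n - N + 1)) := by
    calc ∑ i ∈ Finset.range N, a (n - i) = ∑ k ∈ Finset.range N, a (k + (n - N + 1)) := by
          rw [← Finset.sum_range_reflect]
          exact Finset.sum_congr rfl fun i hi => by
            rw [Finset.mem_range] at hi; congr 1; omega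
      _ ≤ _ := ((summable_nat_add_iff _).mpr ha_sum).sum_le_tsum _ fun i _ => ha _
  have htail : ∑ i ∈ Finset.Ico N n, a (n - i) ≤ ∑' i, a (i + 1) :=
    calc ∑ i ∈ Finset.Ico N n, a (n - i) ≤ ∑ i ∈ Finset.range n, a (n - i) :=
          Finset.sum_le_sum_of_subset_of_nonneg
            (fun i hi => by simp only [Finset.mem_Ico, Finset.mem_range] at *; omega)
            fun i _ _ => ha _
      _ ≤ _ := sum_range_sub_le_tsum ha ha_sum n
  rw [← Finset.sum_range_add_sum_Ico _ hNn]
  calc ∑ i ∈ Finset.range N, a (n - i) * q i + ∑ i ∈ Finset.Ico N n, a (n - i) * q i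
      ≤ ∑ i ∈ Finset.range N, a (n - i) * M + ∑ i ∈ Finset.Ico N n, a (n - i) * B := by
        gcongr with i _ i hi
        · exact ha _
        · exact hqM i
        · exact ha _
        · exact hqB i (Finset.mem_Ico.mp hi).1
    _ ≤ _ := by
        rw [← Finset.sum_mul, ← Finset.sum_mul]
        have hM : 0 ≤ M := (hq 0).trans (hqM 0)
        nlinarith [mul_le_mul_of_nonneg_right hhead hM, mul_le_mul_of_nonneg_right htail hB]

theorem tendsto_zero_of_le_sum_range_sub_mul_add {q e : ℕ → ℝ} {M : ℝ} (ha : ∀ i, 0 ≤ a i)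
    (ha_sum : Summable a) (hS : ∑' i, a (i + 1) < 1) (hq : ∀ n, 0 ≤ q n) (hqM : ∀ n, q n ≤ M)
    (he : Tendsto e atTop (𝓝 0))
    (hle : ∀ᶠ n in atTop, q n ≤ ∑ i ∈ Finset.range n, a (n - i) * q i + e n) :
    Tendsto q atTop (𝓝 0) := by
  set S := ∑' i, a (i + 1)
  have hbdd : IsBoundedUnder (· ≤ ·) atTop q := isBoundedUnder_of ⟨M, hqM⟩
  have hcobdd : IsCoboundedUnder (· ≤ ·) atTop q :=
    (isBoundedUnder_of ⟨0, hq⟩).isCoboundedUnder_le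
  set L := limsup q atTop
  -- Bounding `q` eventually by `L + δ` bounds the convolution eventually by `S (L + δ) + δ`.
  have hL : ∀ δ > 0, L ≤ S * (L + δ) + δ := by
    intro δ hδ
    obtain ⟨N, hN⟩ := eventually_atTop.mp (eventually_lt_of_limsup_lt (lt_add_of_pos_right L hδ))
    have htail : Tendsto (fun n => M * ∑' k, a (k + (n - N + 1)) + e n) atTop (𝓝 0) := by
      simpa using ((tendsto_sum_nat_add a).comp
        ((tendsto_add_atTop_nat 1).comp (tendsto_sub_atTop_nat N))).const_mul M |>.add he
    refine limsup_le_of_le hcobdd ?_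
    filter_upwards [hle, eventually_ge_atTop N, htail.eventually_lt_const hδ]
      with n hn hNn hsmall
    have := sum_range_sub_mul_le ha ha_sum hq hqM (fun i hi => (hN i hi).le) hNn
    linarith
  have hL0 : L ≤ 0 := by
    have : L ≤ S * L := le_of_forall_pos_le_add fun ε hε => by
      nlinarith [hL (ε / 2) (by positivity)]
    nlinarith [le_limsup_of_frequently_le (Frequently.of_forall hq) hbdd]
  refine tendsto_order.2 ⟨fun b hb => Eventually.of_forall fun n => hb.trans_le (hq n),
    fun b hb => eventually_lt_of_limsup_lt (hL0.trans_lt hb) hbdd⟩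

theorem tendsto_of_eq_add_sum_Icc_one_sub_mul {p : ℕ → ℝ} {C : ℝ} (ha : ∀ i, 0 ≤ a i)
    (ha_sum : Summable a) (hS : ∑' i, a (i + 1) < 1) (hp : ∀ n, |p n| ≤ C)
    (hrec : ∀ n, 2 ≤ n → p n = a 0 + ∑ i ∈ Finset.Icc 1 (n - 1), a (n - i) * p i) :
    Tendsto p atTop (𝓝 (a 0 / (1 - ∑' i, a (i + 1)))) := by
  set S := ∑' i, a (i + 1)
  set c := a 0 / (1 - S)
  have hc : a 0 = c * (1 - S) := (div_mul_cancel₀ _ (sub_pos.2 hS).ne').symm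
  have he : Tendsto (fun n => |c| * |∑ i ∈ Finset.Icc 1 (n - 1), a (n - i) - S|) atTop
      (𝓝 0) := by
    simpa [S] using ((tendsto_sum_Icc_one_sub ha_sum).sub_const S).abs.const_mul |c|
  rw [tendsto_iff_dist_tendsto_zero]
  refine tendsto_zero_of_le_sum_range_sub_mul_add (M := C + |c|) ha ha_sum hS
    (fun n => dist_nonneg)
    (fun n => (Real.dist_eq _ _).trans_le ((abs_sub _ _).trans (by gcongr; exact hp n))) he ?_
  filter_upwards [eventually_ge_atTop 2] with n hn
  have hdecomp : p n - c = ∑ i ∈ Finset.Icc 1 (n - 1), a (n - i) * (p i - c)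
      + c * (∑ i ∈ Finset.Icc 1 (n - 1), a (n - i) - S) := by
    rw [hrec n hn, hc]
    simp only [mul_sub, Finset.sum_sub_distrib, ← Finset.sum_mul]
    ring
  calc dist (p n) c
      ≤ ∑ i ∈ Finset.Icc 1 (n - 1), a (n - i) * dist (p i) c
          + |c| * |∑ i ∈ Finset.Icc 1 (n - 1), a (n - i) - S| := by
        rw [Real.dist_eq, hdecomp]
        refine (abs_add_le _ _).trans (add_le_add ((Finset.abs_sum_le_sum_abs _ _).trans_eq ?_)
          (abs_mul _ _).le)
        simp only [abs_mul, abs_of_nonneg (ha _), Real.dist_eq]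
    _ ≤ ∑ i ∈ Finset.range n, a (n - i) * dist (p i) c
          + |c| * |∑ i ∈ Finset.Icc 1 (n - 1), a (n - i) - S| := by
        gcongr
        · exact fun i _ _ => mul_nonneg (ha _) dist_nonneg
        · grind

end Renewal

section ZeroOne

variable {Ω : Type*} {f : Ω → ℝ}

lemma eq_indicator_of_eq_zero_or_eq_one (h01 : ∀ ω, f ω = 0 ∨ f ω = 1) :
    f = (f ⁻¹' {1}).indicator 1 := by
  ext ω
  rcases h01 ω with h | h <;> simp [h]

variable [MeasurableSpace Ω] {μ : Measure Ω}

lemma integral_eq_measureReal_of_eq_zero_or_eq_one (hf : Measurable f)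
    (h01 : ∀ ω, f ω = 0 ∨ f ω = 1) : ∫ ω, f ω ∂μ = μ.real {ω | f ω = 1} := by
  have h := integral_indicator_one (μ := μ) (hf (measurableSet_singleton 1))
  rwa [← eq_indicator_of_eq_zero_or_eq_one h01] at h

lemma integrable_of_eq_zero_or_eq_one [IsFiniteMeasure μ] (hf : Measurable f)
    (h01 : ∀ ω, f ω = 0 ∨ f ω = 1) : Integrable f μ := by
  rw [eq_indicator_of_eq_zero_or_eq_one h01]
  exact (integrable_const 1).indicator (hf (measurableSet_singleton 1))

lemma measureReal_eq_zero_of_eq_zero_or_eq_one [IsProbabilityMeasure μ] (hf : Measurable f)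
    (h01 : ∀ ω, f ω = 0 ∨ f ω = 1) :
    μ.real {ω | f ω = 0} = 1 - μ.real {ω | f ω = 1} := by
  have hcompl : {ω | f ω = 0} = {ω | f ω = 1}ᶜ := by
    ext ω
    rcases h01 ω with h | h <;> simp [h]
  rw [hcompl, probReal_compl_eq_one_sub (s := {ω | f ω = 1}) (hf (measurableSet_singleton 1))]

end ZeroOne

lemma measureReal_eq_add_sum_Icc_one_sub_mul {Ω : Type*} [MeasurableSpace Ω] {μ : Measure Ω}
    [IsProbabilityMeasure μ] {a : ℕ → ℝ} {ξ : ℕ → Ω → ℝ} (hmeas : ∀ n, Measurable (ξ n))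
    (hval : ∀ n, 1 ≤ n → ∀ ω, ξ n ω = 0 ∨ ξ n ω = 1) {n : ℕ} (hn : 2 ≤ n)
    (hcond : μ[ξ n | ⨆ i ∈ Finset.Icc 1 (n - 1),
        MeasurableSpace.comap (ξ i) Real.measurableSpace]
      =ᵐ[μ] fun ω => a 0 + ∑ i ∈ Finset.Icc 1 (n - 1), a (n - i) * ξ i ω) :
    μ.real {ω | ξ n ω = 1}
      = a 0 + ∑ i ∈ Finset.Icc 1 (n - 1), a (n - i) * μ.real {ω | ξ i ω = 1} := by
  have hle : ⨆ i ∈ Finset.Icc 1 (n - 1), MeasurableSpace.comap (ξ i) Real.measurableSpace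
      ≤ ‹MeasurableSpace Ω› := iSup₂_le fun i _ => (hmeas i).comap_le
  have hint : ∀ i ∈ Finset.Icc 1 (n - 1), Integrable (fun ω => a (n - i) * ξ i ω) μ :=
    fun i hi => (integrable_of_eq_zero_or_eq_one (hmeas i)
      (hval i (Finset.mem_Icc.mp hi).1)).const_mul _
  rw [← integral_eq_measureReal_of_eq_zero_or_eq_one (hmeas n) (hval n (by omega)),
    ← integral_condExp hle, integral_congr_ae hcond,
    integral_add (integrable_const _) (integrable_finsetSum _ hint), integral_finsetSum _ hint]
  simp only [integral_const, probReal_univ, one_smul]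
  refine congrArg _ (Finset.sum_congr rfl fun i hi => ?_)
  rw [integral_const_mul, integral_eq_measureReal_of_eq_zero_or_eq_one (hmeas i)
    (hval i (Finset.mem_Icc.mp hi).1)]

theorem dthp_arrival_prob_tendsto_general
    {Ω : Type*} [MeasurableSpace Ω] (μ : Measure Ω) [IsProbabilityMeasure μ]
    (a : ℕ → ℝ) (ξ : ℕ → Ω → ℝ)
    (ha_pos : ∀ i, 0 < a i)
    (ha_sum : Summable a)
    (ha_lt_one : ∑' i, a i < 1)
    (hmeas : ∀ n, Measurable (ξ n))
    (hval : ∀ n, 1 ≤ n → ∀ ω, ξ n ω = 0 ∨ ξ n ω = 1)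
    (hcond : ∀ n, 2 ≤ n →
      μ[ξ n | ⨆ i ∈ Finset.Icc 1 (n - 1), MeasurableSpace.comap (ξ i) Real.measurableSpace]
        =ᵐ[μ] fun ω => a 0 + ∑ i ∈ Finset.Icc 1 (n - 1), a (n - i) * ξ i ω)
    :
    Tendsto (fun n => (μ {ω | ξ n ω = 1}).toReal) atTop
      (𝓝 (a 0 / (1 - ∑' i, a (i + 1)))) ∧
    Tendsto (fun n => (μ {ω | ξ n ω = 0}).toReal) atTop
      (𝓝 (1 - a 0 / (1 - ∑' i, a (i + 1)))) := by
  simp only [← measureReal_def]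
  have hS : ∑' i, a (i + 1) < 1 := by
    linarith [ha_sum.tsum_eq_zero_add, ha_pos 0]
  have hlim : Tendsto (fun n => μ.real {ω | ξ n ω = 1}) atTop
      (𝓝 (a 0 / (1 - ∑' i, a (i + 1)))) :=
    tendsto_of_eq_add_sum_Icc_one_sub_mul (C := 1) (fun i => (ha_pos i).le) ha_sum hS
      (fun n => (abs_of_nonneg measureReal_nonneg).trans_le measureReal_le_one)
      fun n hn => measureReal_eq_add_sum_Icc_one_sub_mul hmeas hval hn (hcond n hn)
  refine ⟨hlim, (tendsto_const_nhds.sub hlim).congr' ?_⟩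
  filter_upwards [eventually_ge_atTop 1] with n hn
  exact (measureReal_eq_zero_of_eq_zero_or_eq_one (hmeas n) (hval n hn)).symm

theorem dthp_arrival_prob_tendsto
    {Ω : Type*} [MeasurableSpace Ω] (μ : Measure Ω) [IsProbabilityMeasure μ]
    (a : ℕ → ℝ) (ξ : ℕ → Ω → ℝ)
    (ha_pos : ∀ i, 0 < a i)
    (ha_sum : Summable a)
    (ha_lt_one : ∑' i, a i < 1)
    (ha_moment : Summable (fun i : ℕ => (i : ℝ) * a i))
    (hmeas : ∀ n, Measurable (ξ n))
    (hval : ∀ n, 1 ≤ n → ∀ ω, ξ n ω = 0 ∨ ξ n ω = 1)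
    (hinit : μ {ω | ξ 1 ω = 1} = ENNReal.ofReal (a 0))
    (hcond : ∀ n, 2 ≤ n →
      μ[ξ n | ⨆ i ∈ Finset.Icc 1 (n - 1), MeasurableSpace.comap (ξ i) Real.measurableSpace]
        =ᵐ[μ] fun ω => a 0 + ∑ i ∈ Finset.Icc 1 (n - 1), a (n - i) * ξ i ω)
    :
    Tendsto (fun n => (μ {ω | ξ n ω = 1}).toReal) atTop
      (𝓝 (a 0 / (1 - ∑' i, a (i + 1)))) ∧
    Tendsto (fun n => (μ {ω | ξ n ω = 0}).toReal) atTop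
      (𝓝 (1 - a 0 / (1 - ∑' i, a (i + 1)))) :=
  dthp_arrival_prob_tendsto_general μ a ξ ha_pos ha_sum ha_lt_one hmeas hval hcond
end

section
/- For every continuous and concave function g : [0,1] → ℝ, the limit Γ_g = lim_{n→∞} (1/n) log 𝔼(exp(n·g(H_n/n))) exists (as a finite real number). -/
/-!
Summing over the `2 ^ n` possible paths, `𝔼 exp (n g (H_n / n))` is the finite sum
`Z n = ∑ E, exp (n g (#E / n)) P_n(E)`, where `P_n(E)` is the product of the conditional step
probabilities of the path whose events occur at the times in `E`.

Split a path of length `p + q` into its first `p` steps `A` and its last `q` steps `B`. Compared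
with a fresh process running through `B`, the intensity at step `p + j` carries the extra
excitation `r ≤ tail a j = ∑_{d ≥ j} a d` coming from `A`. As every intensity is at most
`∑ a < 1`, this changes the probability of step `p + j` by a factor at least
`exp (-tail a j / (1 - ∑ a))`, and `∑_j tail a j = ∑_d d a d < ∞`. Hence
`P_{p+q}(A B) ≥ c P_p(A) P_q(B)` for a constant `c > 0`, and concavity of `g` upgrades this to
`Z (p + q) ≥ c Z p Z q`. Fekete's lemma for the subadditive sequence `-log (c Z n)` gives the
limit, which is finite because `Z n ≤ exp (n max g)`.
-/

open MeasureTheory Filter Topology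

theorem ConcaveOn.mul_add_mul_le {s : Set ℝ} {g : ℝ → ℝ} (hg : ConcaveOn ℝ s g)
    {x y u v : ℝ} (hx : x ∈ s) (hy : y ∈ s) (hu : 0 ≤ u) (hv : 0 ≤ v) :
    u * g x + v * g y ≤ (u + v) * g ((u * x + v * y) / (u + v)) := by
  rcases (add_nonneg hu hv).eq_or_lt with huv | huv
  · obtain ⟨rfl, rfl⟩ : u = 0 ∧ v = 0 := ⟨by linarith, by linarith⟩
    simp
  · have h := hg.2 hx hy (div_nonneg hu huv.le) (div_nonneg hv huv.le)
      (by rw [← add_div, div_self huv.ne'])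
    simp only [smul_eq_mul] at h
    calc u * g x + v * g y = (u + v) * (u / (u + v) * g x + v / (u + v) * g y) := by
          field_simp
      _ ≤ (u + v) * g (u / (u + v) * x + v / (u + v) * y) := by gcongr
      _ = (u + v) * g ((u * x + v * y) / (u + v)) := by
          congr 2; field_simp

lemma add_mul_exp_neg_div_le {v : ℝ} (hv : 0 < v) (r : ℝ) :
    (v + r) * Real.exp (-(r / v)) ≤ v := by
  have h := Real.add_one_le_exp (r / v)
  calc (v + r) * Real.exp (-(r / v)) = v * (r / v + 1) * Real.exp (-(r / v)) := by field_simp; ring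
    _ ≤ v * Real.exp (r / v) * Real.exp (-(r / v)) := by gcongr
    _ = v := by rw [mul_assoc, ← Real.exp_add, add_neg_cancel, Real.exp_zero, mul_one]

theorem exists_tendsto_inv_mul_log_of_mul_le {Z : ℕ → ℝ} {c M : ℝ} (hc : 0 < c)
    (hZ : ∀ n, 0 < Z n) (hmul : ∀ p q, c * (Z p * Z q) ≤ Z (p + q))
    (hle : ∀ n : ℕ, Z n ≤ Real.exp (n * M)) :
    ∃ L, Tendsto (fun n : ℕ => (1 / (n : ℝ)) * Real.log (Z n)) atTop (𝓝 L) := by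
  set u : ℕ → ℝ := fun n => -Real.log (c * Z n)
  have hu : Subadditive u := fun p q => by
    have hcZ := fun n => mul_pos hc (hZ n)
    have : Real.log (c * Z p) + Real.log (c * Z q) ≤ Real.log (c * Z (p + q)) := by
      rw [← Real.log_mul (hcZ p).ne' (hcZ q).ne']
      refine Real.log_le_log (mul_pos (hcZ p) (hcZ q)) ?_
      linarith [mul_le_mul_of_nonneg_left (hmul p q) hc.le]
    simp only [u]; linarith
  have hbdd : BddBelow (Set.range fun n => u n / n) := by
    refine ⟨-(|Real.log c| + |M|), Set.forall_mem_range.2 fun n => ?_⟩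
    rcases Nat.eq_zero_or_pos n with rfl | hn
    · simp only [CharP.cast_eq_zero, div_zero, Left.neg_nonpos_iff]
      positivity
    have hn' : (1 : ℝ) ≤ n := by exact_mod_cast hn
    have hlog : Real.log (Z n) ≤ n * M := by
      simpa using Real.log_le_log (hZ n) (hle n)
    simp only [u]
    rw [Real.log_mul hc.ne' (hZ n).ne', le_div_iff₀ (by linarith)]
    linarith [le_abs_self (Real.log c), mul_le_mul_of_nonneg_left hn' (abs_nonneg (Real.log c)),
      mul_le_mul_of_nonneg_left (le_abs_self M) (Nat.cast_nonneg (α := ℝ) n)]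
  have h := (hu.tendsto_lim hbdd).neg.sub (tendsto_const_div_atTop_nhds_zero_nat (Real.log c))
  rw [sub_zero] at h
  refine ⟨_, h.congr fun n => ?_⟩
  simp only [u, Real.log_mul hc.ne' (hZ n).ne']
  ring

theorem measureReal_inter_eq_mul_of_condExp {Ω : Type*} {m m₀ : MeasurableSpace Ω}
    {μ : Measure[m₀] Ω} [IsFiniteMeasure μ] (hm : m ≤ m₀) {f : Ω → ℝ}
    (hf : Measurable f) (hf01 : ∀ ω, f ω = 0 ∨ f ω = 1) {s : Set Ω}
    (hs : MeasurableSet[m] s) {c : ℝ}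
    (hc : ∀ᵐ ω ∂μ, ω ∈ s → μ[f|m] ω = c) :
    μ.real (s ∩ {ω | f ω = 1}) = c * μ.real s := by
  have : IsFiniteMeasure (μ.trim hm) := isFiniteMeasure_trim hm
  have hT : MeasurableSet {ω | f ω = 1} := hf (measurableSet_singleton 1)
  have hf_eq : f = {ω | f ω = 1}.indicator 1 := funext fun ω => by
    rcases hf01 ω with h | h <;> simp [h]
  have hint : Integrable f μ := by
    rw [hf_eq]
    exact (integrable_const 1).indicator hT
  calc μ.real (s ∩ {ω | f ω = 1}) = ∫ ω in s, f ω ∂μ := by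
        conv_rhs => rw [hf_eq]
        rw [setIntegral_indicator hT, Pi.one_def, setIntegral_const, smul_eq_mul, mul_one]
    _ = ∫ ω in s, μ[f|m] ω ∂μ := (setIntegral_condExp hm hint hs).symm
    _ = ∫ _ in s, c ∂μ := setIntegral_congr_ae (hm _ hs) hc
    _ = c * μ.real s := by rw [setIntegral_const, smul_eq_mul, mul_comm]

namespace DiscreteHawkes

open Finset

variable {a : ℕ → ℝ} {E F A B : Finset ℕ} {n p q j k : ℕ}

/-- The conditional probability that `ξ k = 1` when the earlier events occurred exactly at the
times in `E`, written as a sum over the lags `d = k - i`. -/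
noncomputable def rate (a : ℕ → ℝ) (E : Finset ℕ) (k : ℕ) : ℝ :=
  a 0 + ∑ d ∈ Ico 1 k, if k - d ∈ E then a d else 0

noncomputable def stepProb (a : ℕ → ℝ) (E : Finset ℕ) (k : ℕ) : ℝ :=
  if k ∈ E then rate a E k else 1 - rate a E k

noncomputable def pathProb (a : ℕ → ℝ) (n : ℕ) (E : Finset ℕ) : ℝ :=
  ∏ k ∈ range n, stepProb a E (k + 1)

lemma rate_congr (h : ∀ i < k, i ∈ E ↔ i ∈ F) : rate a E k = rate a F k := by
  unfold rate
  congr 1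
  refine sum_congr rfl fun d hd => ?_
  simp only [h (k - d) (by simp only [mem_Ico] at hd; omega)]

lemma stepProb_congr (h : ∀ i ≤ k, i ∈ E ↔ i ∈ F) : stepProb a E k = stepProb a F k := by
  simp only [stepProb, h k le_rfl, rate_congr fun i hi => h i hi.le]

lemma pathProb_congr (h : ∀ i ≤ n, i ∈ E ↔ i ∈ F) : pathProb a n E = pathProb a n F :=
  prod_congr rfl fun k hk => stepProb_congr fun i hi => h i (by simp only [mem_range] at hk; omega)

lemma pathProb_succ : pathProb a (n + 1) E = pathProb a n E * stepProb a E (n + 1) :=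
  prod_range_succ _ _

theorem sum_pathProb (a : ℕ → ℝ) (n : ℕ) :
    ∑ E ∈ (Finset.Icc 1 n).powerset, pathProb a n E = 1 := by
  induction n with
  | zero => simp [pathProb]
  | succ n ih =>
    rw [← insert_Icc_right_eq_Icc_add_one (by omega), sum_powerset_insert (by simp),
      ← sum_add_distrib, ← ih]
    refine sum_congr rfl fun E hE => ?_
    have hnE : n + 1 ∉ E := fun h => by simpa using mem_powerset.1 hE h
    have hpast : ∀ i ≤ n, i ∈ insert (n + 1) E ↔ i ∈ E := fun i hi => by
      simp only [mem_insert]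
      exact or_iff_right (by omega)
    rw [pathProb_succ, pathProb_succ, pathProb_congr hpast, stepProb, stepProb, if_neg hnE,
      if_pos (mem_insert_self _ _), rate_congr fun i hi => hpast i (by omega)]
    ring

lemma le_rate (ha : ∀ i, 0 ≤ a i) : a 0 ≤ rate a E k :=
  le_add_of_nonneg_right (sum_nonneg fun d _ => by split_ifs <;> simp [ha d])

lemma rate_le_tsum (ha : ∀ i, 0 ≤ a i) (hs : Summable a) : rate a E k ≤ ∑' i, a i :=
  calc rate a E k ≤ ∑ d ∈ insert 0 (Ico 1 k), a d := by
        rw [sum_insert (by simp), rate]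
        gcongr with d
        split_ifs <;> simp [ha d]
    _ ≤ ∑' i, a i := hs.sum_le_tsum _ fun i _ => ha i

lemma stepProb_nonneg (ha : ∀ i, 0 ≤ a i) (hs : Summable a) (hlt : ∑' i, a i < 1) :
    0 ≤ stepProb a E k := by
  unfold stepProb
  split_ifs
  · exact (ha 0).trans (le_rate ha)
  · linarith [rate_le_tsum (E := E) (k := k) ha hs]

lemma stepProb_pos (ha : ∀ i, 0 ≤ a i) (ha0 : 0 < a 0) (hs : Summable a)
    (hlt : ∑' i, a i < 1) : 0 < stepProb a E k := by
  unfold stepProb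
  split_ifs
  · exact ha0.trans_le (le_rate ha)
  · linarith [rate_le_tsum (E := E) (k := k) ha hs]

lemma pathProb_nonneg (ha : ∀ i, 0 ≤ a i) (hs : Summable a) (hlt : ∑' i, a i < 1) :
    0 ≤ pathProb a n E :=
  prod_nonneg fun _ _ => stepProb_nonneg ha hs hlt

lemma pathProb_pos (ha : ∀ i, 0 ≤ a i) (ha0 : 0 < a 0) (hs : Summable a)
    (hlt : ∑' i, a i < 1) : 0 < pathProb a n E :=
  prod_pos fun _ _ => stepProb_pos ha ha0 hs hlt

def pathAppend (p : ℕ) (A B : Finset ℕ) : Finset ℕ :=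
  A ∪ B.map (addLeftEmbedding p)

lemma mem_pathAppend_of_le (hB : B ⊆ Finset.Icc 1 q) {i : ℕ} (hi : i ≤ p) :
    i ∈ pathAppend p A B ↔ i ∈ A := by
  simp only [pathAppend, mem_union, Finset.mem_map, addLeftEmbedding_apply, or_iff_left_iff_imp]
  rintro ⟨b, hb, rfl⟩
  have := mem_Icc.1 (hB hb)
  omega

lemma add_mem_pathAppend (hA : A ⊆ Finset.Icc 1 p) (hj : 0 < j) :
    p + j ∈ pathAppend p A B ↔ j ∈ B := by
  have : p + j ∉ A := fun h => by have := mem_Icc.1 (hA h); omega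
  simp [pathAppend, this]

lemma card_pathAppend (hA : A ⊆ Finset.Icc 1 p) (hB : B ⊆ Finset.Icc 1 q) :
    #(pathAppend p A B) = #A + #B := by
  rw [pathAppend, card_union_of_disjoint, card_map]
  refine disjoint_left.2 fun i hiA hiB => ?_
  obtain ⟨b, hb, rfl⟩ := Finset.mem_map.1 hiB
  have := mem_Icc.1 (hA hiA)
  have := mem_Icc.1 (hB hb)
  simp only [addLeftEmbedding_apply] at *
  omega

theorem sum_powerset_Icc_add {M : Type*} [AddCommMonoid M] (f : Finset ℕ → M) (p q : ℕ) :
    ∑ E ∈ (Finset.Icc 1 (p + q)).powerset, f E =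
      ∑ A ∈ (Finset.Icc 1 p).powerset, ∑ B ∈ (Finset.Icc 1 q).powerset,
        f (pathAppend p A B) := by
  induction q generalizing f with
  | zero => simp [pathAppend]
  | succ q ih =>
    rw [← add_assoc, ← insert_Icc_right_eq_Icc_add_one (by omega),
      sum_powerset_insert (by simp), ih, ih, ← sum_add_distrib]
    refine sum_congr rfl fun A _ => ?_
    rw [← insert_Icc_right_eq_Icc_add_one (by omega), sum_powerset_insert (by simp)]
    simp [pathAppend, map_insert, union_insert, add_assoc]

lemma rate_pathAppend (hA : A ⊆ Finset.Icc 1 p) (hB : B ⊆ Finset.Icc 1 q) (hj : 0 < j) :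
    rate a (pathAppend p A B) (p + j) =
      rate a B j + ∑ d ∈ Ico j (p + j), if p + j - d ∈ A then a d else 0 := by
  rw [rate, rate, ← sum_Ico_consecutive _ hj (Nat.le_add_left j p)]
  have hrecent : ∑ d ∈ Ico 1 j, (if p + j - d ∈ pathAppend p A B then a d else 0) =
      ∑ d ∈ Ico 1 j, if j - d ∈ B then a d else 0 := sum_congr rfl fun d hd => by
    rw [mem_Ico] at hd
    simp only [show p + j - d = p + (j - d) by omega, add_mem_pathAppend hA (by omega : 0 < j - d)]
  have hold : ∑ d ∈ Ico j (p + j), (if p + j - d ∈ pathAppend p A B then a d else 0) =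
      ∑ d ∈ Ico j (p + j), if p + j - d ∈ A then a d else 0 := sum_congr rfl fun d hd => by
    simp only [mem_pathAppend_of_le hB (by rw [mem_Ico] at hd; omega : p + j - d ≤ p)]
  rw [hrecent, hold]
  ring

noncomputable def tail (a : ℕ → ℝ) (j : ℕ) : ℝ :=
  ∑' d, if j ≤ d then a d else 0

lemma summable_tail (ha : ∀ i, 0 ≤ a i) (hs : Summable a) (j : ℕ) :
    Summable fun d => if j ≤ d then a d else 0 :=
  hs.of_nonneg_of_le (fun d => by split_ifs <;> simp [ha d])
    (fun d => by split_ifs <;> simp [ha d])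

lemma tail_nonneg (ha : ∀ i, 0 ≤ a i) (j : ℕ) : 0 ≤ tail a j :=
  tsum_nonneg fun d => by split_ifs <;> simp [ha d]

lemma sum_ite_le_tail (ha : ∀ i, 0 ≤ a i) (hs : Summable a) (P : ℕ → Prop)
    [DecidablePred P] :
    ∑ d ∈ Ico j (p + j), (if P d then a d else 0) ≤ tail a j :=
  calc ∑ d ∈ Ico j (p + j), (if P d then a d else 0)
      ≤ ∑ d ∈ Ico j (p + j), (if j ≤ d then a d else 0) := by
        gcongr with d hd
        rw [if_pos (mem_Ico.1 hd).1]
        split_ifs <;> simp [ha d]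
    _ ≤ tail a j :=
        (summable_tail ha hs j).sum_le_tsum _ fun d _ => by split_ifs <;> simp [ha d]

lemma sum_tail_le (ha : ∀ i, 0 ≤ a i) (hs : Summable a)
    (hm : Summable fun i : ℕ => (i : ℝ) * a i) (q : ℕ) :
    ∑ j ∈ range q, tail a (j + 1) ≤ ∑' d : ℕ, (d : ℝ) * a d := by
  simp only [tail]
  rw [← (Summable.tsum_finsetSum fun j _ => summable_tail ha hs (j + 1))]
  refine Summable.tsum_le_tsum (fun d => ?_) (summable_sum fun j _ => summable_tail ha hs _) hm
  rw [← sum_filter, sum_const, nsmul_eq_mul]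
  refine mul_le_mul_of_nonneg_right ?_ (ha d)
  have : {j ∈ range q | j + 1 ≤ d} ⊆ range d := fun j hj => by
    simp only [mem_filter, mem_range] at hj ⊢; omega
  exact_mod_cast (card_le_card this).trans (card_range d).le

noncomputable def mixingConst (a : ℕ → ℝ) : ℝ :=
  Real.exp (-((∑' d : ℕ, (d : ℝ) * a d) / (1 - ∑' i, a i)))

lemma mixingConst_pos (a : ℕ → ℝ) : 0 < mixingConst a :=
  Real.exp_pos _

lemma exp_neg_tail_mul_stepProb_le (ha : ∀ i, 0 ≤ a i) (hs : Summable a) (hlt : ∑' i, a i < 1)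
    (hA : A ⊆ Finset.Icc 1 p) (hB : B ⊆ Finset.Icc 1 q) (hj : 0 < j) :
    Real.exp (-(tail a j / (1 - ∑' i, a i))) * stepProb a B j ≤
      stepProb a (pathAppend p A B) (p + j) := by
  set r := ∑ d ∈ Ico j (p + j), if p + j - d ∈ A then a d else 0
  have hsplit : rate a (pathAppend p A B) (p + j) = rate a B j + r := rate_pathAppend hA hB hj
  have hr : 0 ≤ r := sum_nonneg fun d _ => by split_ifs <;> simp [ha d]
  have hrt : r ≤ tail a j := sum_ite_le_tail ha hs _
  have hS : 0 < 1 - ∑' i, a i := by linarith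
  have hγ : Real.exp (-(tail a j / (1 - ∑' i, a i))) ≤ 1 :=
    Real.exp_le_one_iff.2 (neg_nonpos.2 (div_nonneg (tail_nonneg ha j) hS.le))
  simp only [stepProb, add_mem_pathAppend hA hj]
  split_ifs
  · rw [hsplit]
    nlinarith [(ha 0).trans (le_rate (E := B) (k := j) ha)]
  · set v := 1 - rate a (pathAppend p A B) (p + j)
    have hv : 1 - ∑' i, a i ≤ v := by
      linarith [rate_le_tsum (E := pathAppend p A B) (k := p + j) ha hs]
    calc Real.exp (-(tail a j / (1 - ∑' i, a i))) * (1 - rate a B j)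
        ≤ (v + r) * Real.exp (-(r / v)) := by
          rw [mul_comm, show 1 - rate a B j = v + r by simp only [v, hsplit]; ring]
          refine mul_le_mul_of_nonneg_left (Real.exp_le_exp.2 (neg_le_neg ?_)) (by linarith)
          exact div_le_div₀ (tail_nonneg ha j) hrt hS hv
      _ ≤ v := add_mul_exp_neg_div_le (hS.trans_le hv) r

theorem mixingConst_mul_pathProb_le (ha : ∀ i, 0 ≤ a i) (hs : Summable a)
    (hm : Summable fun i : ℕ => (i : ℝ) * a i) (hlt : ∑' i, a i < 1)
    (hA : A ⊆ Finset.Icc 1 p) (hB : B ⊆ Finset.Icc 1 q) :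
    mixingConst a * (pathProb a p A * pathProb a q B) ≤
      pathProb a (p + q) (pathAppend p A B) := by
  have hS : 0 < 1 - ∑' i, a i := by linarith
  have hc : mixingConst a ≤
      ∏ x ∈ range q, Real.exp (-(tail a (x + 1) / (1 - ∑' i, a i))) := by
    rw [mixingConst, ← Real.exp_sum, Real.exp_le_exp, sum_neg_distrib, ← sum_div,
      neg_le_neg_iff]
    gcongr
    exact sum_tail_le ha hs hm q
  set γ : ℕ → ℝ := fun j => Real.exp (-(tail a j / (1 - ∑' i, a i)))
  have hfuture : mixingConst a * pathProb a q B ≤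
      ∏ x ∈ range q, stepProb a (pathAppend p A B) (p + x + 1) :=
    calc _ ≤ (∏ x ∈ range q, γ (x + 1)) * pathProb a q B :=
          mul_le_mul_of_nonneg_right hc (pathProb_nonneg ha hs hlt)
      _ = ∏ x ∈ range q, γ (x + 1) * stepProb a B (x + 1) := prod_mul_distrib.symm
      _ ≤ _ := prod_le_prod
          (fun _ _ => mul_nonneg (Real.exp_pos _).le (stepProb_nonneg ha hs hlt))
          (fun x _ => exp_neg_tail_mul_stepProb_le ha hs hlt hA hB x.succ_pos)
  have hsplit : pathProb a (p + q) (pathAppend p A B) =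
      pathProb a p A * ∏ x ∈ range q, stepProb a (pathAppend p A B) (p + x + 1) := by
    rw [← pathProb_congr (n := p) (E := pathAppend p A B) fun i hi => mem_pathAppend_of_le hB hi]
    exact prod_range_add (fun k => stepProb a (pathAppend p A B) (k + 1)) p q
  rw [hsplit, mul_left_comm (mixingConst a)]
  exact mul_le_mul_of_nonneg_left hfuture (pathProb_nonneg ha hs hlt)

lemma card_le_of_subset_Icc (hE : E ⊆ Finset.Icc 1 n) : #E ≤ n := by
  simpa using card_le_card hE

lemma card_div_mem_Icc (hE : E ⊆ Finset.Icc 1 n) : (#E / n : ℝ) ∈ Set.Icc 0 1 :=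
  ⟨by positivity,
    div_le_one_of_le₀ (by exact_mod_cast card_le_of_subset_Icc hE) n.cast_nonneg⟩

lemma mul_card_div (hE : E ⊆ Finset.Icc 1 n) : (n : ℝ) * (#E / n) = #E :=
  mul_div_cancel_of_imp' fun h => by
    have := card_le_of_subset_Icc hE
    simp_all

noncomputable def partitionFn (a : ℕ → ℝ) (g : ℝ → ℝ) (n : ℕ) : ℝ :=
  ∑ E ∈ (Finset.Icc 1 n).powerset, Real.exp (n * g (#E / n)) * pathProb a n E

lemma partitionFn_pos (ha : ∀ i, 0 ≤ a i) (ha0 : 0 < a 0) (hs : Summable a)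
    (hlt : ∑' i, a i < 1) (g : ℝ → ℝ) (n : ℕ) : 0 < partitionFn a g n :=
  sum_pos (fun _ _ => mul_pos (Real.exp_pos _) (pathProb_pos ha ha0 hs hlt)) (powerset_nonempty _)

lemma partitionFn_le_exp (ha : ∀ i, 0 ≤ a i) (hs : Summable a) (hlt : ∑' i, a i < 1)
    {g : ℝ → ℝ} {M : ℝ} (hM : ∀ x ∈ Set.Icc (0 : ℝ) 1, g x ≤ M) (n : ℕ) :
    partitionFn a g n ≤ Real.exp (n * M) :=
  calc partitionFn a g n
      ≤ ∑ E ∈ (Finset.Icc 1 n).powerset, Real.exp (n * M) * pathProb a n E := by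
        refine sum_le_sum fun E hE => ?_
        gcongr
        · exact pathProb_nonneg ha hs hlt
        · exact hM _ (card_div_mem_Icc (mem_powerset.1 hE))
    _ = Real.exp (n * M) := by rw [← mul_sum, sum_pathProb, mul_one]

theorem mixingConst_mul_partitionFn_le (ha : ∀ i, 0 ≤ a i) (hs : Summable a)
    (hm : Summable fun i : ℕ => (i : ℝ) * a i) (hlt : ∑' i, a i < 1) {g : ℝ → ℝ}
    (hg : ConcaveOn ℝ (Set.Icc 0 1) g) (p q : ℕ) :
    mixingConst a * (partitionFn a g p * partitionFn a g q) ≤ partitionFn a g (p + q) := by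
  rw [partitionFn, partitionFn, sum_mul_sum, mul_sum, partitionFn, sum_powerset_Icc_add]
  refine sum_le_sum fun A hA => ?_
  rw [mul_sum]
  refine sum_le_sum fun B hB => ?_
  rw [mem_powerset] at hA hB
  have hexp : Real.exp (p * g (#A / p)) * Real.exp (q * g (#B / q)) ≤
      Real.exp ((p + q : ℕ) * g (#(pathAppend p A B) / (p + q : ℕ))) := by
    rw [← Real.exp_add, Real.exp_le_exp, card_pathAppend hA hB]
    push_cast
    have := hg.mul_add_mul_le (card_div_mem_Icc hA) (card_div_mem_Icc hB)
      p.cast_nonneg q.cast_nonneg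
    rwa [mul_card_div hA, mul_card_div hB] at this
  calc _ = (Real.exp (p * g (#A / p)) * Real.exp (q * g (#B / q))) *
        (mixingConst a * (pathProb a p A * pathProb a q B)) := by ring
    _ ≤ _ := mul_le_mul hexp (mixingConst_mul_pathProb_le ha hs hm hlt hA hB)
        (mul_nonneg (mixingConst_pos a).le
          (mul_nonneg (pathProb_nonneg ha hs hlt) (pathProb_nonneg ha hs hlt)))
        (Real.exp_pos _).le

section Cylinders

variable {Ω : Type*} {ξ : ℕ → Ω → ℝ}

noncomputable abbrev history (ξ : ℕ → Ω → ℝ) (n : ℕ) : MeasurableSpace Ω :=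
  ⨆ i ∈ Finset.Icc 1 n, MeasurableSpace.comap (ξ i) Real.measurableSpace

lemma history_le [MeasurableSpace Ω] (hmeas : ∀ n, Measurable (ξ n)) (n : ℕ) :
    history ξ n ≤ ‹MeasurableSpace Ω› :=
  iSup₂_le fun i _ => (hmeas i).comap_le

def cylinder (ξ : ℕ → Ω → ℝ) (n : ℕ) (E : Finset ℕ) : Set Ω :=
  {ω | ∀ i ∈ Finset.Icc 1 n, ξ i ω = if i ∈ E then 1 else 0}

lemma cylinder_zero (E : Finset ℕ) : cylinder ξ 0 E = Set.univ := by
  ext; simp [cylinder]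

lemma cylinder_succ (n : ℕ) (E : Finset ℕ) :
    cylinder ξ (n + 1) E =
      cylinder ξ n E ∩ {ω | ξ (n + 1) ω = if n + 1 ∈ E then 1 else 0} := by
  ext ω
  simp only [cylinder, ← insert_Icc_right_eq_Icc_add_one (by omega : 1 ≤ n + 1),
    forall_mem_insert, Set.mem_ofPred_eq, Set.mem_inter_iff, and_comm]

lemma measurableSet_cylinder (n : ℕ) (E : Finset ℕ) :
    MeasurableSet[history ξ n] (cylinder ξ n E) := by
  have : cylinder ξ n E = ⋂ i ∈ Finset.Icc 1 n, ξ i ⁻¹' {if i ∈ E then 1 else 0} := by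
    ext; simp [cylinder]
  rw [this]
  exact .biInter (Finset.Icc 1 n).countable_toSet fun i hi =>
    le_iSup₂ (f := fun i (_ : i ∈ Finset.Icc 1 n) => MeasurableSpace.comap (ξ i) _) i hi _
      ⟨_, measurableSet_singleton _, rfl⟩

lemma rate_eq_of_mem_cylinder {a : ℕ → ℝ} {n : ℕ} {E : Finset ℕ} {ω : Ω}
    (hω : ω ∈ cylinder ξ n E) :
    a 0 + ∑ i ∈ Finset.Icc 1 n, a (n + 1 - i) * ξ i ω = rate a E (n + 1) := by
  rw [rate]
  congr 1
  refine sum_nbij' (fun i => n + 1 - i) (fun d => n + 1 - d) ?_ ?_ ?_ ?_ fun i hi => ?_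
  iterate 4 intro i hi; simp only [Finset.mem_Icc, mem_Ico] at hi ⊢; omega
  rw [hω i hi, show n + 1 - (n + 1 - i) = i by simp only [Finset.mem_Icc] at hi; omega]
  split_ifs <;> simp

lemma mem_cylinder_iff (hval : ∀ n, 1 ≤ n → ∀ ω, ξ n ω = 0 ∨ ξ n ω = 1) {n : ℕ}
    {E : Finset ℕ} (hE : E ⊆ Finset.Icc 1 n) (ω : Ω) :
    ω ∈ cylinder ξ n E ↔ E = {i ∈ Finset.Icc 1 n | ξ i ω = 1} := by
  constructor
  · intro hω
    ext i
    by_cases hi : i ∈ Finset.Icc 1 n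
    · have := hω i hi
      split_ifs at this with hiE <;> simp [hi, hiE, this]
    · simp only [mem_filter, hi, false_and, iff_false]
      exact fun hiE => hi (hE hiE)
  · rintro rfl i hi
    rcases hval i (Finset.mem_Icc.1 hi).1 ω with h | h <;> simp [hi, h]

variable [MeasurableSpace Ω] {μ : Measure Ω} {a : ℕ → ℝ}

structure IsHawkes (μ : Measure Ω) (a : ℕ → ℝ) (ξ : ℕ → Ω → ℝ) : Prop where
  measurable : ∀ n, Measurable (ξ n)
  mem_zero_one : ∀ n, 1 ≤ n → ∀ ω, ξ n ω = 0 ∨ ξ n ω = 1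
  measure_one : μ {ω | ξ 1 ω = 1} = ENNReal.ofReal (a 0)
  condExp_ae_eq : ∀ n, 2 ≤ n → μ[ξ n | history ξ (n - 1)]
    =ᵐ[μ] fun ω => a 0 + ∑ i ∈ Finset.Icc 1 (n - 1), a (n - i) * ξ i ω

lemma measureReal_cylinder_inter_succ [IsProbabilityMeasure μ] (ha0 : 0 ≤ a 0)
    (hξ : IsHawkes μ a ξ) (n : ℕ) (E : Finset ℕ) :
    μ.real (cylinder ξ n E ∩ {ω | ξ (n + 1) ω = 1}) =
      rate a E (n + 1) * μ.real (cylinder ξ n E) := by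
  rcases Nat.eq_zero_or_pos n with rfl | hn
  · simp [cylinder_zero, rate, measureReal_def, hξ.measure_one, ha0]
  refine measureReal_inter_eq_mul_of_condExp (history_le hξ.measurable n) (hξ.measurable _)
    (hξ.mem_zero_one _ (by omega)) (measurableSet_cylinder n E) ?_
  filter_upwards [hξ.condExp_ae_eq (n + 1) (by omega)] with ω hω hmem
  rw [Nat.add_sub_cancel] at hω
  rw [hω, rate_eq_of_mem_cylinder hmem]

theorem measureReal_cylinder [IsProbabilityMeasure μ] (ha0 : 0 ≤ a 0)
    (hξ : IsHawkes μ a ξ) (n : ℕ) (E : Finset ℕ) :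
    μ.real (cylinder ξ n E) = pathProb a n E := by
  induction n with
  | zero => simp [cylinder_zero, pathProb]
  | succ n ih =>
    have hstep := measureReal_cylinder_inter_succ ha0 hξ n E
    rw [cylinder_succ, pathProb_succ, stepProb, ← ih]
    split_ifs
    · rw [hstep, mul_comm]
    · have hsplit := measureReal_inter_add_sdiff (μ := μ) (s := cylinder ξ n E)
        (show MeasurableSet {ω | ξ (n + 1) ω = 1} from
          hξ.measurable _ (measurableSet_singleton 1))
      have hzero : cylinder ξ n E \ {ω | ξ (n + 1) ω = 1} =
          cylinder ξ n E ∩ {ω | ξ (n + 1) ω = 0} := by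
        ext ω
        rcases hξ.mem_zero_one (n + 1) (by omega) ω with h | h <;> simp [h]
      rw [hzero, hstep] at hsplit
      linarith

theorem integral_comp_sum_eq [IsFiniteMeasure μ] (hmeas : ∀ n, Measurable (ξ n))
    (hval : ∀ n, 1 ≤ n → ∀ ω, ξ n ω = 0 ∨ ξ n ω = 1) (n : ℕ) (φ : ℝ → ℝ) :
    ∫ ω, φ (∑ i ∈ Finset.Icc 1 n, ξ i ω) ∂μ =
      ∑ E ∈ (Finset.Icc 1 n).powerset, φ #E * μ.real (cylinder ξ n E) := by
  have hpt : ∀ ω, φ (∑ i ∈ Finset.Icc 1 n, ξ i ω) =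
      ∑ E ∈ (Finset.Icc 1 n).powerset, (cylinder ξ n E).indicator (fun _ => φ #E) ω := by
    intro ω
    set E₀ := {i ∈ Finset.Icc 1 n | ξ i ω = 1}
    have hcard : ∑ i ∈ Finset.Icc 1 n, ξ i ω = #E₀ := by
      rw [card_filter]
      push_cast
      refine sum_congr rfl fun i hi => ?_
      rcases hval i (Finset.mem_Icc.1 hi).1 ω with h | h <;> simp [h]
    calc φ (∑ i ∈ Finset.Icc 1 n, ξ i ω)
        = ∑ E ∈ (Finset.Icc 1 n).powerset, if E = E₀ then φ #E else 0 := by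
          rw [sum_ite_eq', if_pos (mem_powerset.2 (filter_subset _ _)), hcard]
      _ = _ := sum_congr rfl fun E hE => by
          have := mem_cylinder_iff hval (mem_powerset.1 hE) ω
          by_cases h : E = E₀
          · rw [if_pos h, Set.indicator_of_mem (this.2 h)]
          · rw [if_neg h, Set.indicator_of_notMem (mt this.1 h)]
  rw [integral_congr_ae (Eventually.of_forall hpt), integral_finsetSum _ fun E _ =>
    (integrable_const _).indicator ((history_le hmeas n) _ (measurableSet_cylinder n E))]
  refine sum_congr rfl fun E _ => ?_
  rw [integral_indicator_const _ ((history_le hmeas n) _ (measurableSet_cylinder n E)),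
    smul_eq_mul, mul_comm]

end Cylinders

end DiscreteHawkes

open MeasureTheory Filter Topology Set

theorem dthp_bryc_limit_exists
    {Ω : Type*} [MeasurableSpace Ω] (μ : Measure Ω) [IsProbabilityMeasure μ]
    (a : ℕ → ℝ) (ξ : ℕ → Ω → ℝ)
    (ha_pos : ∀ i, 0 < a i)
    (ha_sum : Summable a)
    (ha_lt_one : ∑' i, a i < 1)
    (ha_moment : Summable (fun i : ℕ => (i : ℝ) * a i))
    (hmeas : ∀ n, Measurable (ξ n))
    (hval : ∀ n, 1 ≤ n → ∀ ω, ξ n ω = 0 ∨ ξ n ω = 1)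
    (hinit : μ {ω | ξ 1 ω = 1} = ENNReal.ofReal (a 0))
    (hcond : ∀ n, 2 ≤ n →
      μ[ξ n | ⨆ i ∈ Finset.Icc 1 (n - 1), MeasurableSpace.comap (ξ i) Real.measurableSpace]
        =ᵐ[μ] fun ω => a 0 + ∑ i ∈ Finset.Icc 1 (n - 1), a (n - i) * ξ i ω)
    :
    ∀ g : ℝ → ℝ, ContinuousOn g (Set.Icc 0 1) → ConcaveOn ℝ (Set.Icc 0 1) g →
      ∃ Γg : ℝ,
        Tendsto
          (fun n : ℕ =>
            (1 / (n : ℝ)) *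
              Real.log (∫ ω, Real.exp (n * g ((∑ i ∈ Finset.Icc 1 n, ξ i ω) / n)) ∂μ))
          atTop (𝓝 Γg) := by
  intro g hg_cont hg_conc
  have ha : ∀ i, 0 ≤ a i := fun i => (ha_pos i).le
  have hξ : DiscreteHawkes.IsHawkes μ a ξ := ⟨hmeas, hval, hinit, hcond⟩
  obtain ⟨x, -, hx⟩ := isCompact_Icc.exists_isMaxOn (nonempty_Icc.2 zero_le_one) hg_cont
  have hZ : ∀ n : ℕ, ∫ ω, Real.exp (n * g ((∑ i ∈ Finset.Icc 1 n, ξ i ω) / n)) ∂μ =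
      DiscreteHawkes.partitionFn a g n := fun n => by
    rw [DiscreteHawkes.integral_comp_sum_eq hmeas hval n fun s => Real.exp (n * g (s / n))]
    exact Finset.sum_congr rfl fun E _ => by
      rw [DiscreteHawkes.measureReal_cylinder (ha 0) hξ]
  simp only [hZ]
  exact exists_tendsto_inv_mul_log_of_mul_le (DiscreteHawkes.mixingConst_pos a)
    (DiscreteHawkes.partitionFn_pos ha (ha_pos 0) ha_sum ha_lt_one g)
    (DiscreteHawkes.mixingConst_mul_partitionFn_le ha ha_sum ha_moment ha_lt_one hg_conc)
    (DiscreteHawkes.partitionFn_le_exp ha ha_sum ha_lt_one fun y hy => hx hy)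
end

section
/- For every t ∈ ℝ, the scaled logarithmic moment generating functions converge pointwise: the limit Γ(t) = lim_{n→∞} (1/n) log 𝔼(e^{t H_n}) exists (as a finite real number). -/
open MeasureTheory Filter Topology Set

/-!
Write `θ = exp t` and `Z n = 𝔼 θ ^ H n`. Conditioning on the first step shows that the
generating function `pgf a θ m b` of a DTHP whose baseline intensity `b` varies in time obeys a
recursion in `m` in which only the baseline changes: an event raises the future baseline by the
kernel. By induction it is increasing in the baseline when `θ ≥ 1` and decreasing when `θ ≤ 1`.
Given the history up to time `n`, the rest of the process is again such a DTHP, with baseline at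
least `a 0`, so `Z (n + m) = 𝔼 [θ ^ H n * pgf a θ m bₙ]` is at least `Z n * Z m` when `θ ≥ 1` and
at most `Z n * Z m` when `θ ≤ 1`. As `|log Z n| ≤ |t| n`, Fekete's lemma applied to `± log Z n`
gives the limit.
-/

section

open Real

lemma exists_tendsto_log_div_of_submultiplicative {Z : ℕ → ℝ} (hpos : ∀ n, 0 < Z n)
    (hmul : ∀ m n, Z (m + n) ≤ Z m * Z n) {C : ℝ} (hC : ∀ n, -(C * n) ≤ log (Z n)) :
    ∃ l, Tendsto (fun n : ℕ => log (Z n) / n) atTop (𝓝 l) := by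
  have hsub : Subadditive fun n => log (Z n) := fun m n => by
    rw [← log_mul (hpos m).ne' (hpos n).ne']
    exact log_le_log (hpos _) (hmul m n)
  refine ⟨hsub.lim, hsub.tendsto_lim ⟨min (-C) 0, ?_⟩⟩
  rintro _ ⟨n, rfl⟩
  rcases Nat.eq_zero_or_pos n with rfl | hn
  · simp
  · rw [le_div_iff₀ (by exact_mod_cast hn)]
    nlinarith [hC n, min_le_left (-C) 0, (Nat.cast_pos.2 hn : (0 : ℝ) < n)]

lemma exists_tendsto_log_div_of_supermultiplicative {Z : ℕ → ℝ} (hpos : ∀ n, 0 < Z n)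
    (hmul : ∀ m n, Z m * Z n ≤ Z (m + n)) {C : ℝ} (hC : ∀ n, log (Z n) ≤ C * n) :
    ∃ l, Tendsto (fun n : ℕ => log (Z n) / n) atTop (𝓝 l) := by
  obtain ⟨l, hl⟩ := exists_tendsto_log_div_of_submultiplicative (Z := fun n => (Z n)⁻¹)
    (fun n => inv_pos.2 (hpos n))
    (fun m n => by rw [← mul_inv]; exact inv_anti₀ (mul_pos (hpos m) (hpos n)) (hmul m n))
    (C := C) fun n => by rw [log_inv]; linarith [hC n]
  exact ⟨-l, by simpa [log_inv, neg_div] using hl.neg⟩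

lemma abs_log_integral_exp_le {Ω : Type*} [MeasurableSpace Ω] {μ : Measure Ω}
    [IsProbabilityMeasure μ] {f : Ω → ℝ} {C : ℝ} (hf : Integrable (fun ω => exp (f ω)) μ)
    (hC : ∀ ω, |f ω| ≤ C) : |log (∫ ω, exp (f ω) ∂μ)| ≤ C := by
  have hlo : exp (-C) ≤ ∫ ω, exp (f ω) ∂μ := by
    simpa using integral_mono (integrable_const _) hf
      fun ω => exp_le_exp.2 (neg_le_of_abs_le (hC ω))
  have hhi : ∫ ω, exp (f ω) ∂μ ≤ exp C := by
    simpa using integral_mono hf (integrable_const _)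
      fun ω => exp_le_exp.2 (le_of_abs_le (hC ω))
  have hpos := (exp_pos _).trans_le hlo
  rw [abs_le, le_log_iff_exp_le hpos, log_le_iff_le_exp hpos]
  exact ⟨hlo, hhi⟩

end

namespace DTHP

/-- `b k` is the baseline intensity at step `k ≥ 1`: `pgf a θ m b = 𝔼 θ ^ H m` for the process
with intensity `b k + ∑ i < k, a (k - i) ξ i`, computed by conditioning on the first step. -/
noncomputable def pgf (a : ℕ → ℝ) (θ : ℝ) : ℕ → (ℕ → ℝ) → ℝ
  | 0, _ => 1
  | m + 1, b => (1 - b 1) * pgf a θ m (fun j => b (j + 1)) +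
      b 1 * θ * pgf a θ m (fun j => b (j + 1) + a j)

/-- The baseline of the process restarted after time `n` with event set `s ⊆ [1, n]`. -/
def baselineAfter (a b : ℕ → ℝ) (n : ℕ) (s : Finset ℕ) : ℕ → ℝ :=
  fun j => b (n + j) + ∑ i ∈ s, a (n + j - i)

/-- Keeps every intensity of the process with baseline `b` in `[0, 1]`. -/
def IsAdmissible (a b : ℕ → ℝ) : Prop :=
  ∀ k, 1 ≤ k → 0 ≤ b k ∧ b k + ∑ i ∈ Finset.Ico 1 k, a i ≤ 1

section Baseline

variable {a b : ℕ → ℝ}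

lemma IsAdmissible.nonneg_one (hb : IsAdmissible a b) : 0 ≤ b 1 := (hb 1 le_rfl).1

lemma IsAdmissible.le_one (hb : IsAdmissible a b) : b 1 ≤ 1 := by
  simpa using (hb 1 le_rfl).2

lemma IsAdmissible.shift (ha : ∀ i, 0 ≤ a i) (hb : IsAdmissible a b) :
    IsAdmissible a (fun j => b (j + 1)) := by
  intro k hk
  obtain ⟨h0, h1⟩ := hb (k + 1) (by omega)
  rw [Finset.sum_Ico_succ_top hk] at h1
  exact ⟨h0, by linarith [ha k]⟩

lemma IsAdmissible.shift_add (ha : ∀ i, 0 ≤ a i) (hb : IsAdmissible a b) :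
    IsAdmissible a (fun j => b (j + 1) + a j) := by
  intro k hk
  obtain ⟨h0, h1⟩ := hb (k + 1) (by omega)
  rw [Finset.sum_Ico_succ_top hk] at h1
  exact ⟨by linarith [ha k], by linarith⟩

lemma isAdmissible_const (ha : ∀ i, 0 ≤ a i) (hs : Summable a) (h1 : ∑' i, a i ≤ 1) :
    IsAdmissible a (fun _ => a 0) := by
  intro k hk
  refine ⟨ha 0, ?_⟩
  rw [← Finset.sum_eq_sum_Ico_succ_bot hk, ← Finset.range_eq_Ico]
  exact (hs.sum_le_tsum _ fun i _ => ha i).trans h1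

@[simp] lemma baselineAfter_zero : baselineAfter a b 0 ∅ = b := by
  funext j
  simp [baselineAfter]

lemma baselineAfter_succ (n : ℕ) (s : Finset ℕ) :
    (fun j => baselineAfter a b n s (j + 1)) = baselineAfter a b (n + 1) s := by
  funext j
  simp only [baselineAfter, ← add_assoc, Nat.add_right_comm n 1 j]

lemma baselineAfter_succ_insert {n : ℕ} {s : Finset ℕ} (hs : n + 1 ∉ s) :
    (fun j => baselineAfter a b n s (j + 1) + a j) =
      baselineAfter a b (n + 1) (insert (n + 1) s) := by
  funext j
  rw [baselineAfter, baselineAfter, Finset.sum_insert hs, show n + 1 + j - (n + 1) = j by omega,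
    show n + (j + 1) = n + 1 + j by omega]
  ring

lemma isAdmissible_baselineAfter (ha : ∀ i, 0 ≤ a i) (hb : IsAdmissible a b) :
    ∀ {n : ℕ} {s : Finset ℕ}, s ⊆ Finset.Icc 1 n → IsAdmissible a (baselineAfter a b n s)
  | 0, s, hs => by
    rw [show s = ∅ by simpa using hs, baselineAfter_zero]
    exact hb
  | n + 1, s, hs => by
    rw [← Finset.insert_Icc_right_eq_Icc_add_one (by omega)] at hs
    by_cases h : n + 1 ∈ s
    · rw [← Finset.insert_erase h, ← baselineAfter_succ_insert (Finset.notMem_erase _ _)]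
      exact (isAdmissible_baselineAfter ha hb (Finset.subset_insert_iff.1 hs)).shift_add ha
    · rw [← baselineAfter_succ]
      exact (isAdmissible_baselineAfter ha hb
        ((Finset.subset_insert_iff_of_notMem h).1 hs)).shift ha

end Baseline

section Pgf

variable {a : ℕ → ℝ} {θ : ℝ}

lemma pgf_nonneg (ha : ∀ i, 0 ≤ a i) (hθ : 0 ≤ θ) :
    ∀ (m : ℕ) {b : ℕ → ℝ}, IsAdmissible a b → 0 ≤ pgf a θ m b
  | 0, _, _ => zero_le_one
  | m + 1, b, hb => by
    have hX := pgf_nonneg ha hθ m (hb.shift ha)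
    have hY := pgf_nonneg ha hθ m (hb.shift_add ha)
    have h1 := sub_nonneg.2 hb.le_one
    rw [pgf]
    exact add_nonneg (mul_nonneg h1 hX) (mul_nonneg (mul_nonneg hb.nonneg_one hθ) hY)

/-- `pgf` is increasing in the baseline when `θ ≥ 1` and decreasing when `θ ≤ 1`. -/
theorem mul_pgf_sub_pgf_nonneg (ha : ∀ i, 0 ≤ a i) (hθ : 0 ≤ θ) :
    ∀ (m : ℕ) {b b' : ℕ → ℝ}, IsAdmissible a b → IsAdmissible a b' →
      (∀ k, 1 ≤ k → b k ≤ b' k) → 0 ≤ (θ - 1) * (pgf a θ m b' - pgf a θ m b)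
  | 0, _, _, _, _, _ => by simp [pgf]
  | m + 1, b, b', hb, hb', hle => by
    set X := pgf a θ m (fun j => b (j + 1))
    set Y := pgf a θ m (fun j => b (j + 1) + a j)
    set X' := pgf a θ m (fun j => b' (j + 1))
    set Y' := pgf a θ m (fun j => b' (j + 1) + a j)
    have hX : 0 ≤ (θ - 1) * (X' - X) := mul_pgf_sub_pgf_nonneg ha hθ m (hb.shift ha)
      (hb'.shift ha) fun k _ => hle (k + 1) (by omega)
    have hY : 0 ≤ (θ - 1) * (Y' - Y) := mul_pgf_sub_pgf_nonneg ha hθ m (hb.shift_add ha)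
      (hb'.shift_add ha) fun k _ => add_le_add_left (hle (k + 1) (by omega)) _
    have hXY : 0 ≤ (θ - 1) * (Y - X) := mul_pgf_sub_pgf_nonneg ha hθ m (hb.shift ha)
      (hb.shift_add ha) fun k _ => le_add_of_nonneg_right (ha k)
    have hX0 : 0 ≤ X := pgf_nonneg ha hθ m (hb.shift ha)
    have key : (θ - 1) * (pgf a θ (m + 1) b' - pgf a θ (m + 1) b) =
        (1 - b' 1) * ((θ - 1) * (X' - X)) + b' 1 * θ * ((θ - 1) * (Y' - Y)) +
          (b' 1 - b 1) * (θ * ((θ - 1) * (Y - X)) + (θ - 1) ^ 2 * X) := by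
      simp only [pgf, X, Y, X', Y']
      ring
    rw [key]
    have h1 := sub_nonneg.2 hb'.le_one
    have h2 := mul_nonneg hb'.nonneg_one hθ
    have h3 := sub_nonneg.2 (hle 1 le_rfl)
    exact add_nonneg (add_nonneg (mul_nonneg h1 hX) (mul_nonneg h2 hY))
      (mul_nonneg h3 (add_nonneg (mul_nonneg hθ hXY) (mul_nonneg (sq_nonneg _) hX0)))

lemma pgf_succ_baselineAfter (b : ℕ → ℝ) {n : ℕ} {s : Finset ℕ} (hs : n + 1 ∉ s) (m : ℕ) :
    pgf a θ (m + 1) (baselineAfter a b n s) =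
      (1 - baselineAfter a b n s 1) * pgf a θ m (baselineAfter a b (n + 1) s) +
        baselineAfter a b n s 1 * θ * pgf a θ m (baselineAfter a b (n + 1) (insert (n + 1) s)) := by
  rw [pgf, baselineAfter_succ, baselineAfter_succ_insert hs]

end Pgf

noncomputable def occurrences {Ω : Type*} (ξ : ℕ → Ω → ℝ) (n : ℕ) (ω : Ω) : Finset ℕ :=
  (Finset.Icc 1 n).filter (fun i => ξ i ω = 1)

abbrev history {Ω : Type*} (ξ : ℕ → Ω → ℝ) (n : ℕ) : MeasurableSpace Ω :=
  ⨆ i ∈ Finset.Icc 1 n, MeasurableSpace.comap (ξ i) Real.measurableSpace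

def intensity (a : ℕ → ℝ) (n : ℕ) (s : Finset ℕ) : ℝ :=
  a 0 + ∑ i ∈ s, a (n + 1 - i)

lemma baselineAfter_const_one (a : ℕ → ℝ) (n : ℕ) (s : Finset ℕ) :
    baselineAfter a (fun _ => a 0) n s 1 = intensity a n s := rfl

section Occurrences

variable {Ω : Type*} {ξ : ℕ → Ω → ℝ}

@[simp] lemma occurrences_zero (ω : Ω) : occurrences ξ 0 ω = ∅ := by
  simp [occurrences]

lemma occurrences_subset (n : ℕ) (ω : Ω) : occurrences ξ n ω ⊆ Finset.Icc 1 n :=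
  Finset.filter_subset _ _

lemma succ_notMem_occurrences (n : ℕ) (ω : Ω) : n + 1 ∉ occurrences ξ n ω := fun h => by
  simpa using occurrences_subset n ω h

lemma card_occurrences_le (n : ℕ) (ω : Ω) : (occurrences ξ n ω).card ≤ n := by
  simpa using Finset.card_le_card (occurrences_subset (ξ := ξ) n ω)

lemma occurrences_succ (n : ℕ) (ω : Ω) :
    occurrences ξ (n + 1) ω =
      if ξ (n + 1) ω = 1 then insert (n + 1) (occurrences ξ n ω) else occurrences ξ n ω := by
  rw [occurrences, ← Finset.insert_Icc_right_eq_Icc_add_one (by omega), Finset.filter_insert]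
  rfl

lemma sum_mul_eq_sum_occurrences (hval : ∀ n, 1 ≤ n → ∀ ω, ξ n ω = 0 ∨ ξ n ω = 1)
    (g : ℕ → ℝ) (n : ℕ) (ω : Ω) :
    ∑ i ∈ Finset.Icc 1 n, g i * ξ i ω = ∑ i ∈ occurrences ξ n ω, g i := by
  rw [occurrences, Finset.sum_filter]
  refine Finset.sum_congr rfl fun i hi => ?_
  rcases hval i (Finset.mem_Icc.1 hi).1 ω with h | h <;> simp [h]

lemma sum_eq_card_occurrences (hval : ∀ n, 1 ≤ n → ∀ ω, ξ n ω = 0 ∨ ξ n ω = 1)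
    (n : ℕ) (ω : Ω) : ∑ i ∈ Finset.Icc 1 n, ξ i ω = (occurrences ξ n ω).card := by
  simpa using sum_mul_eq_sum_occurrences hval 1 n ω

lemma measurable_history {i n : ℕ} (hi : i ∈ Finset.Icc 1 n) : Measurable[history ξ n] (ξ i) :=
  measurable_iff_comap_le.2 <| le_iSup₂
    (f := fun i (_ : i ∈ Finset.Icc 1 n) => MeasurableSpace.comap (ξ i) Real.measurableSpace) i hi

lemma history_le_succ (n : ℕ) : history ξ n ≤ history ξ (n + 1) :=
  biSup_mono fun _ hi => Finset.Icc_subset_Icc_right (Nat.le_succ n) hi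

lemma stronglyMeasurable_comp_occurrences :
    ∀ (n : ℕ) (f : Finset ℕ → ℝ), StronglyMeasurable[history ξ n] (fun ω => f (occurrences ξ n ω))
  | 0, f => by simpa using stronglyMeasurable_const
  | n + 1, f => by
    simp_rw [occurrences_succ, apply_ite f]
    exact StronglyMeasurable.ite (measurable_history (by simp) (measurableSet_singleton 1))
      ((stronglyMeasurable_comp_occurrences n fun s => f (insert (n + 1) s)).mono
        (history_le_succ n))
      ((stronglyMeasurable_comp_occurrences n f).mono (history_le_succ n))

end Occurrences

section History

variable {Ω : Type*} [MeasurableSpace Ω] {ξ : ℕ → Ω → ℝ}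

lemma history_le (hmeas : ∀ n, Measurable (ξ n)) (n : ℕ) : history ξ n ≤ ‹MeasurableSpace Ω› :=
  iSup₂_le fun i _ => (hmeas i).comap_le

lemma integrable_comp_occurrences {μ : Measure Ω} [IsFiniteMeasure μ]
    (hmeas : ∀ n, Measurable (ξ n)) (n : ℕ) (f : Finset ℕ → ℝ) :
    Integrable (fun ω => f (occurrences ξ n ω)) μ :=
  Integrable.of_bound ((stronglyMeasurable_comp_occurrences n f).mono
    (history_le hmeas n)).aestronglyMeasurable (∑ s ∈ (Finset.Icc 1 n).powerset, ‖f s‖)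
    (ae_of_all _ fun ω => Finset.single_le_sum (f := fun s => ‖f s‖) (fun _ _ => norm_nonneg _)
      (Finset.mem_powerset.2 (occurrences_subset n ω)))

end History

end DTHP

open DTHP in
structure IsDTHP {Ω : Type*} [MeasurableSpace Ω] (μ : Measure Ω) (a : ℕ → ℝ) (ξ : ℕ → Ω → ℝ) :
    Prop where
  measurable : ∀ n, Measurable (ξ n)
  mem_zero_one : ∀ n, 1 ≤ n → ∀ ω, ξ n ω = 0 ∨ ξ n ω = 1
  measure_first : μ {ω | ξ 1 ω = 1} = ENNReal.ofReal (a 0)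
  condExp_eq : ∀ n, 2 ≤ n →
    μ[ξ n | history ξ (n - 1)] =ᵐ[μ] fun ω => a 0 + ∑ i ∈ Finset.Icc 1 (n - 1), a (n - i) * ξ i ω

namespace IsDTHP

open DTHP

variable {Ω : Type*} [MeasurableSpace Ω] {μ : Measure Ω} {a : ℕ → ℝ} {ξ : ℕ → Ω → ℝ}

lemma integral_first (hX : IsDTHP μ a ξ) (ha0 : 0 ≤ a 0) : ∫ ω, ξ 1 ω ∂μ = a 0 := by
  have hind : ξ 1 = {ω | ξ 1 ω = 1}.indicator 1 := by
    funext ω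
    rcases hX.mem_zero_one 1 le_rfl ω with h | h <;> simp [h]
  rw [hind, integral_indicator_one
      (show MeasurableSet {ω | ξ 1 ω = 1} from hX.measurable 1 (measurableSet_singleton 1)),
    measureReal_def, hX.measure_first, ENNReal.toReal_ofReal ha0]

lemma condExp_succ [IsProbabilityMeasure μ] (hX : IsDTHP μ a ξ) (ha0 : 0 ≤ a 0) (n : ℕ) :
    μ[ξ (n + 1) | history ξ n] =ᵐ[μ] fun ω => intensity a n (occurrences ξ n ω) := by
  rcases Nat.eq_zero_or_pos n with rfl | hn
  · have : history ξ 0 = ⊥ := by simp [history]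
    rw [this, condExp_bot]
    exact ae_of_all _ fun ω => by simp [intensity, hX.integral_first ha0]
  · simp_rw [intensity, ← sum_mul_eq_sum_occurrences hX.mem_zero_one]
    simpa only [Nat.add_sub_cancel] using hX.condExp_eq (n + 1) (by omega)

lemma integrable (hX : IsDTHP μ a ξ) [IsFiniteMeasure μ] {n : ℕ} (hn : 1 ≤ n) :
    Integrable (ξ n) μ :=
  Integrable.of_bound (hX.measurable n).aestronglyMeasurable 1 <| ae_of_all _ fun ω => by
    rcases hX.mem_zero_one n hn ω with h | h <;> simp [h]

lemma integral_comp_occurrences_succ [IsProbabilityMeasure μ] (hX : IsDTHP μ a ξ)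
    (ha0 : 0 ≤ a 0) (f : Finset ℕ → ℝ) (n : ℕ) :
    ∫ ω, f (occurrences ξ (n + 1) ω) ∂μ =
      ∫ ω, ((1 - intensity a n (occurrences ξ n ω)) * f (occurrences ξ n ω) +
        intensity a n (occurrences ξ n ω) * f (insert (n + 1) (occurrences ξ n ω))) ∂μ := by
  set g : Finset ℕ → ℝ := fun s => f (insert (n + 1) s) - f s
  have hint (k : ℕ) (F : Finset ℕ → ℝ) := integrable_comp_occurrences (μ := μ) hX.measurable k F
  have hstep (ω : Ω) : f (occurrences ξ (n + 1) ω) =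
      f (occurrences ξ n ω) + g (occurrences ξ n ω) * ξ (n + 1) ω := by
    rw [occurrences_succ]
    rcases hX.mem_zero_one (n + 1) (by omega) ω with h | h <;> simp [h, g]
  have hprod : Integrable (fun ω => g (occurrences ξ n ω) * ξ (n + 1) ω) μ :=
    ((hint (n + 1) f).sub (hint n f)).congr <| ae_of_all _ fun ω => by
      simp only [Pi.sub_apply, hstep ω, add_sub_cancel_left]
  have hcond : ∫ ω, g (occurrences ξ n ω) * ξ (n + 1) ω ∂μ =
      ∫ ω, g (occurrences ξ n ω) * intensity a n (occurrences ξ n ω) ∂μ :=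
    calc _ = ∫ ω, μ[(fun ω => g (occurrences ξ n ω)) * ξ (n + 1) | history ξ n] ω ∂μ :=
          (integral_condExp (history_le hX.measurable n)).symm
      _ = ∫ ω, g (occurrences ξ n ω) * μ[ξ (n + 1) | history ξ n] ω ∂μ :=
          integral_congr_ae (condExp_mul_of_stronglyMeasurable_left
            (stronglyMeasurable_comp_occurrences n g) hprod (hX.integrable (by omega)))
      _ = _ := integral_congr_ae <| (hX.condExp_succ ha0 n).mono fun ω h => by simp only [h]
  calc ∫ ω, f (occurrences ξ (n + 1) ω) ∂μ
      = ∫ ω, f (occurrences ξ n ω) ∂μ + ∫ ω, g (occurrences ξ n ω) * ξ (n + 1) ω ∂μ := by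
        simp_rw [hstep]
        exact integral_add (hint n f) hprod
    _ = ∫ ω, (f (occurrences ξ n ω) +
          g (occurrences ξ n ω) * intensity a n (occurrences ξ n ω)) ∂μ := by
        rw [hcond, integral_add (hint n f) (hint n fun s => g s * intensity a n s)]
    _ = _ := by
        simp only [g]
        congr 1
        funext ω
        ring

theorem integral_pow_card_mul_pgf [IsProbabilityMeasure μ] (hX : IsDTHP μ a ξ) (ha0 : 0 ≤ a 0)
    (θ : ℝ) : ∀ n m : ℕ, ∫ ω, θ ^ (occurrences ξ n ω).card *
      pgf a θ m (baselineAfter a (fun _ => a 0) n (occurrences ξ n ω)) ∂μ =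
        pgf a θ (n + m) (fun _ => a 0)
  | 0, m => by simp
  | n + 1, m => by
    rw [hX.integral_comp_occurrences_succ ha0
        (fun s => θ ^ s.card * pgf a θ m (baselineAfter a (fun _ => a 0) (n + 1) s)),
      show n + 1 + m = n + (m + 1) by omega, ← integral_pow_card_mul_pgf hX ha0 θ n (m + 1)]
    congr 1
    funext ω
    have hn := succ_notMem_occurrences (ξ := ξ) n ω
    rw [pgf_succ_baselineAfter _ hn, Finset.card_insert_of_notMem hn, pow_succ,
      baselineAfter_const_one]
    ring

theorem mul_sub_integral_pow_card_nonneg [IsProbabilityMeasure μ] (hX : IsDTHP μ a ξ)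
    (ha : ∀ i, 0 ≤ a i) (hs : Summable a) (h1 : ∑' i, a i ≤ 1) {θ : ℝ} (hθ : 0 ≤ θ) (n m : ℕ) :
    0 ≤ (θ - 1) * (∫ ω, θ ^ (occurrences ξ (n + m) ω).card ∂μ -
      (∫ ω, θ ^ (occurrences ξ n ω).card ∂μ) * ∫ ω, θ ^ (occurrences ξ m ω).card ∂μ) := by
  have hZ (k : ℕ) : ∫ ω, θ ^ (occurrences ξ k ω).card ∂μ = pgf a θ k (fun _ => a 0) := by
    simpa [pgf] using hX.integral_pow_card_mul_pgf (ha 0) θ k 0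
  set c : ℕ → ℝ := fun _ => a 0
  rw [hZ (n + m), hZ m, ← hX.integral_pow_card_mul_pgf (ha 0) θ n m, ← integral_mul_const,
    ← integral_sub
      (integrable_comp_occurrences hX.measurable n fun s => θ ^ s.card * pgf a θ m
        (baselineAfter a c n s))
      (integrable_comp_occurrences hX.measurable n fun s => θ ^ s.card * pgf a θ m c),
    ← integral_const_mul]
  refine integral_nonneg fun ω => ?_
  have hc := isAdmissible_const ha hs h1
  have hmono := mul_pgf_sub_pgf_nonneg ha hθ m hc
    (isAdmissible_baselineAfter ha hc (occurrences_subset (ξ := ξ) n ω))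
    fun k _ => le_add_of_nonneg_right (Finset.sum_nonneg fun i _ => ha _)
  calc (0 : ℝ) ≤ θ ^ (occurrences ξ n ω).card *
        ((θ - 1) * (pgf a θ m (baselineAfter a c n (occurrences ξ n ω)) - pgf a θ m c)) :=
      mul_nonneg (pow_nonneg hθ _) hmono
    _ = _ := by ring

lemma exp_mul_sum_eq_pow_card (hX : IsDTHP μ a ξ) (t : ℝ) (n : ℕ) (ω : Ω) :
    Real.exp (t * ∑ i ∈ Finset.Icc 1 n, ξ i ω) = Real.exp t ^ (occurrences ξ n ω).card := by
  rw [sum_eq_card_occurrences hX.mem_zero_one, mul_comm, Real.exp_nat_mul]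

lemma integrable_exp_mul_sum [IsFiniteMeasure μ] (hX : IsDTHP μ a ξ) (t : ℝ) (n : ℕ) :
    Integrable (fun ω => Real.exp (t * ∑ i ∈ Finset.Icc 1 n, ξ i ω)) μ := by
  simp_rw [hX.exp_mul_sum_eq_pow_card]
  exact integrable_comp_occurrences hX.measurable n fun s => Real.exp t ^ s.card

lemma abs_log_integral_exp_mul_sum_le [IsProbabilityMeasure μ] (hX : IsDTHP μ a ξ) (t : ℝ)
    (n : ℕ) : |Real.log (∫ ω, Real.exp (t * ∑ i ∈ Finset.Icc 1 n, ξ i ω) ∂μ)| ≤ |t| * n := by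
  refine abs_log_integral_exp_le (hX.integrable_exp_mul_sum t n) fun ω => ?_
  rw [sum_eq_card_occurrences hX.mem_zero_one, abs_mul, Nat.abs_cast]
  exact mul_le_mul_of_nonneg_left (by exact_mod_cast card_occurrences_le n ω) (abs_nonneg t)

end IsDTHP

theorem dthp_scaled_log_mgf_converges_general
    {Ω : Type*} [MeasurableSpace Ω] (μ : Measure Ω) [IsProbabilityMeasure μ]
    (a : ℕ → ℝ) (ξ : ℕ → Ω → ℝ)
    (ha_pos : ∀ i, 0 < a i)
    (ha_sum : Summable a)
    (ha_lt_one : ∑' i, a i < 1)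
    (hmeas : ∀ n, Measurable (ξ n))
    (hval : ∀ n, 1 ≤ n → ∀ ω, ξ n ω = 0 ∨ ξ n ω = 1)
    (hinit : μ {ω | ξ 1 ω = 1} = ENNReal.ofReal (a 0))
    (hcond : ∀ n, 2 ≤ n →
      μ[ξ n | ⨆ i ∈ Finset.Icc 1 (n - 1), MeasurableSpace.comap (ξ i) Real.measurableSpace]
        =ᵐ[μ] fun ω => a 0 + ∑ i ∈ Finset.Icc 1 (n - 1), a (n - i) * ξ i ω)
    :
    ∀ t : ℝ, ∃ Γt : ℝ,
      Tendsto
        (fun n : ℕ =>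
          (1 / (n : ℝ)) *
            Real.log (∫ ω, Real.exp (t * ∑ i ∈ Finset.Icc 1 n, ξ i ω) ∂μ))
        atTop (𝓝 Γt) := by
  intro t
  have hX : IsDTHP μ a ξ := ⟨hmeas, hval, hinit, hcond⟩
  set Z : ℕ → ℝ := fun n => ∫ ω, Real.exp (t * ∑ i ∈ Finset.Icc 1 n, ξ i ω) ∂μ
  have hpos (n : ℕ) : 0 < Z n := integral_exp_pos (hX.integrable_exp_mul_sum t n)
  have hmul (m n : ℕ) : 0 ≤ (Real.exp t - 1) * (Z (m + n) - Z m * Z n) := by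
    simp only [Z, hX.exp_mul_sum_eq_pow_card]
    exact hX.mul_sub_integral_pow_card_nonneg (fun i => (ha_pos i).le) ha_sum ha_lt_one.le
      (Real.exp_pos t).le m n
  simp_rw [one_div_mul_eq_div]
  rcases lt_trichotomy t 0 with ht | rfl | ht
  · have hθ : Real.exp t - 1 < 0 := sub_neg.2 (Real.exp_lt_one_iff.2 ht)
    exact exists_tendsto_log_div_of_submultiplicative hpos
      (fun m n => sub_nonpos.1 (nonpos_of_mul_nonneg_right (hmul m n) hθ))
      fun n => neg_le_of_abs_le (hX.abs_log_integral_exp_mul_sum_le t n)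
  · exact ⟨0, by simp⟩
  · have hθ : 0 < Real.exp t - 1 := sub_pos.2 (Real.one_lt_exp_iff.2 ht)
    exact exists_tendsto_log_div_of_supermultiplicative hpos
      (fun m n => sub_nonneg.1 (nonneg_of_mul_nonneg_right (hmul m n) hθ))
      fun n => le_of_abs_le (hX.abs_log_integral_exp_mul_sum_le t n)

theorem dthp_scaled_log_mgf_converges
    {Ω : Type*} [MeasurableSpace Ω] (μ : Measure Ω) [IsProbabilityMeasure μ]
    (a : ℕ → ℝ) (ξ : ℕ → Ω → ℝ)
    (ha_pos : ∀ i, 0 < a i)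
    (ha_sum : Summable a)
    (ha_lt_one : ∑' i, a i < 1)
    (ha_moment : Summable (fun i : ℕ => (i : ℝ) * a i))
    (hmeas : ∀ n, Measurable (ξ n))
    (hval : ∀ n, 1 ≤ n → ∀ ω, ξ n ω = 0 ∨ ξ n ω = 1)
    (hinit : μ {ω | ξ 1 ω = 1} = ENNReal.ofReal (a 0))
    (hcond : ∀ n, 2 ≤ n →
      μ[ξ n | ⨆ i ∈ Finset.Icc 1 (n - 1), MeasurableSpace.comap (ξ i) Real.measurableSpace]
        =ᵐ[μ] fun ω => a 0 + ∑ i ∈ Finset.Icc 1 (n - 1), a (n - i) * ξ i ω)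
    :
    ∀ t : ℝ, ∃ Γt : ℝ,
      Tendsto
        (fun n : ℕ =>
          (1 / (n : ℝ)) *
            Real.log (∫ ω, Real.exp (t * ∑ i ∈ Finset.Icc 1 n, ξ i ω) ∂μ))
        atTop (𝓝 Γt) :=
  dthp_scaled_log_mgf_converges_general μ a ξ ha_pos ha_sum ha_lt_one hmeas hval hinit hcond
end

section
/- For every t ≤ 0, the sequence of moment generating functions is nonincreasing in n, i.e. 𝔼(e^{t H_n}) ≤ 𝔼(e^{t H_{n−1}}) for all n ≥ 2, and satisfies the bounds (1 − a_0)^n < 𝔼(e^{t H_n}) ≤ 1 for all n ≥ 1. -/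
open MeasureTheory Filter Topology Set

/-!
For `t ≤ 0` and `ξ ≥ 0`, `exp (t * H_n)` lies in `(0, 1]` and decreases in `n` pointwise, which
gives monotonicity and the upper bound. For the lower bound, `exp (t * H_n) = 1` on the event
`{H_n = 0}` and is positive elsewhere. On `{H_{n-1} = 0}` the conditional intensity of `ξ n` reduces
to `a 0`, so `ℙ(H_n = 0) = (1 - a 0) ^ n`; since `a 0 > 0` the complement has positive
probability, and the inequality is strict.
-/

section

variable {Ω : Type*} {ξ : ℕ → Ω → ℝ}

def quietEvent (ξ : ℕ → Ω → ℝ) (n : ℕ) : Set Ω := {ω | ∀ i ∈ Finset.Icc 1 n, ξ i ω = 0}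

lemma quietEvent_eq_biInter (n : ℕ) : quietEvent ξ n = ⋂ i ∈ Finset.Icc 1 n, ξ i ⁻¹' {0} := by
  ext; simp [quietEvent]

lemma quietEvent_succ (n : ℕ) :
    quietEvent ξ (n + 1) = quietEvent ξ n ∩ {ω | ξ (n + 1) ω = 0} := by
  rw [quietEvent_eq_biInter, quietEvent_eq_biInter,
    ← Finset.insert_Icc_right_eq_Icc_add_one (by omega), Finset.set_biInter_insert, Set.inter_comm]
  rfl

lemma quietEvent_one (h01 : ∀ ω, ξ 1 ω = 0 ∨ ξ 1 ω = 1) : quietEvent ξ 1 = {ω | ξ 1 ω = 1}ᶜ := by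
  ext ω; rcases h01 ω with h | h <;> simp [quietEvent, h]

abbrev history (ξ : ℕ → Ω → ℝ) (n : ℕ) : MeasurableSpace Ω :=
  ⨆ i ∈ Finset.Icc 1 n, MeasurableSpace.comap (ξ i) Real.measurableSpace

lemma measurableSet_history_quietEvent (n : ℕ) : MeasurableSet[history ξ n] (quietEvent ξ n) := by
  rw [quietEvent_eq_biInter]
  refine .biInter (Finset.Icc 1 n).countable_toSet fun i hi => ?_
  exact le_iSup₂ (f := fun i (_ : i ∈ Finset.Icc 1 n) =>
    MeasurableSpace.comap (ξ i) Real.measurableSpace) i hi _ ⟨{0}, measurableSet_singleton 0, rfl⟩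

lemma exp_mul_sum_le_one {t : ℝ} (ht : t ≤ 0) (hnonneg : ∀ i, 1 ≤ i → ∀ ω, 0 ≤ ξ i ω)
    (n : ℕ) (ω : Ω) :
    Real.exp (t * ∑ i ∈ Finset.Icc 1 n, ξ i ω) ≤ 1 :=
  Real.exp_le_one_iff.mpr <| mul_nonpos_of_nonpos_of_nonneg ht <|
    Finset.sum_nonneg fun i hi => hnonneg i (Finset.mem_Icc.mp hi).1 ω

end

section

variable {Ω : Type*} [MeasurableSpace Ω] {μ : Measure Ω} {ξ : ℕ → Ω → ℝ} {t : ℝ}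

lemma integrable_of_zero_or_one [IsFiniteMeasure μ] {X : Ω → ℝ} (hX : Measurable X)
    (h01 : ∀ ω, X ω = 0 ∨ X ω = 1) : Integrable X μ :=
  .of_bound hX.aestronglyMeasurable 1 (ae_of_all _ fun ω => by rcases h01 ω with h | h <;> simp [h])

lemma measureReal_inter_setOf_eq_zero [IsFiniteMeasure μ] {X : Ω → ℝ} (s : Set Ω)
    (hX : Measurable X) (h01 : ∀ ω, X ω = 0 ∨ X ω = 1) :
    μ.real (s ∩ {ω | X ω = 0}) = μ.real s - ∫ ω in s, X ω ∂μ := by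
  have hind : {ω | X ω = 0}.indicator (fun _ => (1 : ℝ)) = fun ω => 1 - X ω := by
    funext ω; rcases h01 ω with h | h <;> simp [h]
  calc μ.real (s ∩ {ω | X ω = 0})
      = ∫ ω in s, {ω | X ω = 0}.indicator (fun _ => (1 : ℝ)) ω ∂μ := by
        rw [setIntegral_indicator (measurableSet_eq_fun hX measurable_const), setIntegral_const,
          smul_eq_mul, mul_one]
    _ = μ.real s - ∫ ω in s, X ω ∂μ := by
        rw [hind, integral_sub (integrable_const 1) (integrable_of_zero_or_one hX h01).integrableOn,
          setIntegral_const, smul_eq_mul, mul_one]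

lemma history_le (hmeas : ∀ n, Measurable (ξ n)) (n : ℕ) : history ξ n ≤ ‹MeasurableSpace Ω› :=
  iSup₂_le fun i _ => (hmeas i).comap_le

lemma setIntegral_quietEvent_succ [IsFiniteMeasure μ] {a : ℕ → ℝ} {n : ℕ}
    (hmeas : ∀ n, Measurable (ξ n)) (hint : Integrable (ξ (n + 1)) μ)
    (hcond : μ[ξ (n + 1) | history ξ n]
      =ᵐ[μ] fun ω => a 0 + ∑ i ∈ Finset.Icc 1 n, a (n + 1 - i) * ξ i ω) :
    ∫ ω in quietEvent ξ n, ξ (n + 1) ω ∂μ = a 0 * μ.real (quietEvent ξ n) := by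
  have hle := history_le hmeas n
  have hA := measurableSet_history_quietEvent (ξ := ξ) n
  rw [← setIntegral_condExp hle hint hA,
    setIntegral_congr_ae (hle _ hA) (hcond.mono fun ω hω _ => hω),
    setIntegral_congr_fun (hle _ hA) (g := fun _ => a 0) fun ω hω => ?_, setIntegral_const,
    smul_eq_mul, mul_comm]
  rw [Finset.sum_eq_zero fun i hi => by rw [hω i hi, mul_zero], add_zero]

lemma measureReal_quietEvent [IsProbabilityMeasure μ] {a : ℕ → ℝ} (ha0 : 0 ≤ a 0)
    (hmeas : ∀ n, Measurable (ξ n)) (hval : ∀ n, 1 ≤ n → ∀ ω, ξ n ω = 0 ∨ ξ n ω = 1)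
    (hinit : μ {ω | ξ 1 ω = 1} = ENNReal.ofReal (a 0))
    (hcond : ∀ n, 2 ≤ n →
      μ[ξ n | history ξ (n - 1)] =ᵐ[μ] fun ω => a 0 + ∑ i ∈ Finset.Icc 1 (n - 1), a (n - i) * ξ i ω)
    {n : ℕ} (hn : 1 ≤ n) : μ.real (quietEvent ξ n) = (1 - a 0) ^ n := by
  induction n, hn using Nat.le_induction with
  | base =>
    rw [quietEvent_one (hval 1 le_rfl), probReal_compl_eq_one_sub
      (measurableSet_eq_fun (hmeas 1) measurable_const), measureReal_def, hinit,
      ENNReal.toReal_ofReal ha0, pow_one]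
  | succ m hm ih =>
    have hcond' := hcond (m + 1) (by omega)
    simp only [Nat.add_sub_cancel] at hcond'
    rw [quietEvent_succ, measureReal_inter_setOf_eq_zero _ (hmeas _) (hval _ (by omega)),
      setIntegral_quietEvent_succ hmeas (integrable_of_zero_or_one (hmeas _) (hval _ (by omega)))
        hcond', ih, pow_succ]
    ring

lemma integrable_exp_mul_sum [IsFiniteMeasure μ] (ht : t ≤ 0) (hmeas : ∀ n, Measurable (ξ n))
    (hnonneg : ∀ i, 1 ≤ i → ∀ ω, 0 ≤ ξ i ω) (n : ℕ) :
    Integrable (fun ω => Real.exp (t * ∑ i ∈ Finset.Icc 1 n, ξ i ω)) μ := by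
  refine .of_bound (by fun_prop) 1 (ae_of_all _ fun ω => ?_)
  rw [Real.norm_of_nonneg (Real.exp_pos _).le]
  exact exp_mul_sum_le_one ht hnonneg n ω

lemma integral_exp_mul_sum_le_one [IsProbabilityMeasure μ] (ht : t ≤ 0)
    (hmeas : ∀ n, Measurable (ξ n)) (hnonneg : ∀ i, 1 ≤ i → ∀ ω, 0 ≤ ξ i ω) (n : ℕ) :
    ∫ ω, Real.exp (t * ∑ i ∈ Finset.Icc 1 n, ξ i ω) ∂μ ≤ 1 := by
  simpa using integral_mono (integrable_exp_mul_sum (μ := μ) ht hmeas hnonneg n)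
    (integrable_const 1) (exp_mul_sum_le_one ht hnonneg n)

lemma integral_exp_mul_sum_succ_le [IsFiniteMeasure μ] (ht : t ≤ 0)
    (hmeas : ∀ n, Measurable (ξ n)) (hnonneg : ∀ i, 1 ≤ i → ∀ ω, 0 ≤ ξ i ω) (n : ℕ) :
    ∫ ω, Real.exp (t * ∑ i ∈ Finset.Icc 1 (n + 1), ξ i ω) ∂μ
      ≤ ∫ ω, Real.exp (t * ∑ i ∈ Finset.Icc 1 n, ξ i ω) ∂μ := by
  refine integral_mono (integrable_exp_mul_sum ht hmeas hnonneg _)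
    (integrable_exp_mul_sum ht hmeas hnonneg _) fun ω => ?_
  rw [Real.exp_le_exp, Finset.sum_Icc_succ_top (by omega), mul_add]
  exact add_le_of_nonpos_right (mul_nonpos_of_nonpos_of_nonneg ht (hnonneg _ (by omega) ω))

lemma measureReal_quietEvent_lt_integral_exp_mul_sum [IsProbabilityMeasure μ] (ht : t ≤ 0)
    (hmeas : ∀ n, Measurable (ξ n)) (hnonneg : ∀ i, 1 ≤ i → ∀ ω, 0 ≤ ξ i ω) {n : ℕ}
    (hlt : μ.real (quietEvent ξ n) < 1) :
    μ.real (quietEvent ξ n) < ∫ ω, Real.exp (t * ∑ i ∈ Finset.Icc 1 n, ξ i ω) ∂μ := by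
  have hA : MeasurableSet (quietEvent ξ n) :=
    history_le hmeas n _ (measurableSet_history_quietEvent n)
  have hquiet : ∫ ω in quietEvent ξ n, Real.exp (t * ∑ i ∈ Finset.Icc 1 n, ξ i ω) ∂μ
      = μ.real (quietEvent ξ n) := by
    rw [setIntegral_congr_fun hA (g := fun _ => 1) fun ω hω => by
      simp [Finset.sum_eq_zero hω], setIntegral_const, smul_eq_mul, mul_one]
  have hloud : μ.real (quietEvent ξ n)ᶜ ≠ 0 := by
    rw [probReal_compl_eq_one_sub hA]; linarith
  have : NeZero (μ.restrict (quietEvent ξ n)ᶜ) :=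
    ⟨Measure.restrict_eq_zero.not.mpr ((measureReal_ne_zero_iff).mp hloud)⟩
  have hint := integrable_exp_mul_sum (μ := μ) ht hmeas hnonneg n
  rw [← integral_add_compl hA hint, hquiet]
  exact lt_add_of_pos_right _ (integral_exp_pos hint.restrict)

end

theorem dthp_mgf_nonpositive_t_bounds_general
    {Ω : Type*} [MeasurableSpace Ω] (μ : Measure Ω) [IsProbabilityMeasure μ]
    (a : ℕ → ℝ) (ξ : ℕ → Ω → ℝ)
    (ha_pos : ∀ i, 0 < a i)
    (hmeas : ∀ n, Measurable (ξ n))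
    (hval : ∀ n, 1 ≤ n → ∀ ω, ξ n ω = 0 ∨ ξ n ω = 1)
    (hinit : μ {ω | ξ 1 ω = 1} = ENNReal.ofReal (a 0))
    (hcond : ∀ n, 2 ≤ n →
      μ[ξ n | ⨆ i ∈ Finset.Icc 1 (n - 1), MeasurableSpace.comap (ξ i) Real.measurableSpace]
        =ᵐ[μ] fun ω => a 0 + ∑ i ∈ Finset.Icc 1 (n - 1), a (n - i) * ξ i ω)
    :
    ∀ t : ℝ, t ≤ 0 →
      (∀ n, 1 ≤ n →
        (∫ ω, Real.exp (t * ∑ i ∈ Finset.Icc 1 (n + 1), ξ i ω) ∂μ) ≤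
          ∫ ω, Real.exp (t * ∑ i ∈ Finset.Icc 1 n, ξ i ω) ∂μ) ∧
      (∀ n, 1 ≤ n →
        (1 - a 0) ^ n < (∫ ω, Real.exp (t * ∑ i ∈ Finset.Icc 1 n, ξ i ω) ∂μ) ∧
        (∫ ω, Real.exp (t * ∑ i ∈ Finset.Icc 1 n, ξ i ω) ∂μ) ≤ 1) := by
  intro t ht
  have hnonneg : ∀ i, 1 ≤ i → ∀ ω, 0 ≤ ξ i ω := fun i hi ω => by
    rcases hval i hi ω with h | h <;> simp [h]
  refine ⟨fun n _ => integral_exp_mul_sum_succ_le ht hmeas hnonneg n,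
    fun n hn => ⟨?_, integral_exp_mul_sum_le_one ht hmeas hnonneg n⟩⟩
  have hquiet := measureReal_quietEvent (ha_pos 0).le hmeas hval hinit hcond hn
  have hquiet_one := measureReal_quietEvent (ha_pos 0).le hmeas hval hinit hcond le_rfl
  rw [pow_one] at hquiet_one
  rw [← hquiet]
  refine measureReal_quietEvent_lt_integral_exp_mul_sum ht hmeas hnonneg ?_
  rw [hquiet]
  exact pow_lt_one₀ (hquiet_one ▸ measureReal_nonneg) (by linarith [ha_pos 0]) (by omega)

theorem dthp_mgf_nonpositive_t_bounds
    {Ω : Type*} [MeasurableSpace Ω] (μ : Measure Ω) [IsProbabilityMeasure μ]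
    (a : ℕ → ℝ) (ξ : ℕ → Ω → ℝ)
    (ha_pos : ∀ i, 0 < a i)
    (ha_sum : Summable a)
    (ha_lt_one : ∑' i, a i < 1)
    (ha_moment : Summable (fun i : ℕ => (i : ℝ) * a i))
    (hmeas : ∀ n, Measurable (ξ n))
    (hval : ∀ n, 1 ≤ n → ∀ ω, ξ n ω = 0 ∨ ξ n ω = 1)
    (hinit : μ {ω | ξ 1 ω = 1} = ENNReal.ofReal (a 0))
    (hcond : ∀ n, 2 ≤ n →
      μ[ξ n | ⨆ i ∈ Finset.Icc 1 (n - 1), MeasurableSpace.comap (ξ i) Real.measurableSpace]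
        =ᵐ[μ] fun ω => a 0 + ∑ i ∈ Finset.Icc 1 (n - 1), a (n - i) * ξ i ω)
    :
    ∀ t : ℝ, t ≤ 0 →
      (∀ n, 1 ≤ n →
        (∫ ω, Real.exp (t * ∑ i ∈ Finset.Icc 1 (n + 1), ξ i ω) ∂μ) ≤
          ∫ ω, Real.exp (t * ∑ i ∈ Finset.Icc 1 n, ξ i ω) ∂μ) ∧
      (∀ n, 1 ≤ n →
        (1 - a 0) ^ n < (∫ ω, Real.exp (t * ∑ i ∈ Finset.Icc 1 n, ξ i ω) ∂μ) ∧
        (∫ ω, Real.exp (t * ∑ i ∈ Finset.Icc 1 n, ξ i ω) ∂μ) ≤ 1) :=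
  dthp_mgf_nonpositive_t_bounds_general μ a ξ ha_pos hmeas hval hinit hcond
end
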